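/- arXiv:2307.12735 — 5 statements merged into one kernel-verified Lean document; each statement's English description precedes it below -/
import Mathlib

section
/- Let ν, ν̃ ∈ M₊(ℝ), let H > 0 and let h : ℝ → ℝ be a measurable function with |h(x)| ≤ H for all x ∈ ℝ. Then |∫_ℝ h(x) B₀[ν](dx) − ∫_ℝ h(x) B₀[ν̃](dx)| ≤ 3H ‖ν − ν̃‖_{TV}, where ‖·‖_{TV} denotes the total variation norm. -/
open MeasureTheory Set Filter

/-- The trait-mixing (reproduction) operator `B₀`: the pushforward of `(1/ρ)·(ν ⊗ ν)`
under `(z₁, z₂) ↦ (z₁ + z₂)/2`, where `ρ = ν(ℝ)`, and `0` if `ν` is not finite. -/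
noncomputable def B0 (ν : Measure ℝ) : Measure ℝ := by
  classical
  exact if h : IsFiniteMeasure ν then
    haveI := h
    Measure.map (fun p : ℝ × ℝ => (p.1 + p.2) / 2) ((ν Set.univ)⁻¹ • ν.prod ν)
  else 0

/-- Total variation distance between two finite measures, via duality with
measurable functions bounded by `1`. -/
noncomputable def tvDist (μ ν : Measure ℝ) : ℝ :=
  ⨆ h : {h : ℝ → ℝ // Measurable h ∧ ∀ x, |h x| ≤ 1},
    |(∫ x, h.1 x ∂μ) - ∫ x, h.1 x ∂ν|

/-- `f` is a weak (measure) solution of `∂ₜ f = B₀[f] − m f` on `[0, T]`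
with initial datum `f0`: it takes values in finite nonnegative measures, is
continuous in time for the total variation norm, and satisfies the Duhamel
formula on every Borel set. -/
def IsWeakSolution (m : ℝ → ℝ) (f0 : Measure ℝ) (T : ℝ) (f : ℝ → Measure ℝ) : Prop :=
  (∀ t ∈ Set.Icc 0 T, IsFiniteMeasure (f t)) ∧
  (∀ t ∈ Set.Icc 0 T,
    Filter.Tendsto (fun s => tvDist (f s) (f t)) (nhdsWithin t (Set.Icc 0 T)) (nhds 0)) ∧
  (∀ A : Set ℝ, MeasurableSet A → ∀ t ∈ Set.Icc 0 T,
    f t A = (∫⁻ x in A, ENNReal.ofReal (Real.exp (-(m x) * t)) ∂f0)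
      + ∫⁻ s in Set.Icc 0 t,
          ∫⁻ x in A, ENNReal.ofReal (Real.exp (-(m x) * (t - s))) ∂(B0 (f s)))

/-- A weak solution on `[0, T]` for every `T > 0`, i.e. on `[0, ∞)`. -/
def IsWeakSolutionGlobal (m : ℝ → ℝ) (f0 : Measure ℝ) (f : ℝ → Measure ℝ) : Prop :=
  ∀ T > 0, IsWeakSolution m f0 T f

/-!
With `ρ = ν(ℝ)`, `σ = ν̃(ℝ)` and `Φ(μ, ξ) = ∫∫ h((x + y)/2) dμ(x) dξ(y)`, one has
`∫ h dB₀[ν] = ρ⁻¹ Φ(ν, ν)`. Passing from `ρ⁻¹ Φ(ν, ν)` to `σ⁻¹ Φ(ν̃, ν̃)` through `Φ(ν, ν̃)`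
splits the difference into three terms, each at most `H ‖ν − ν̃‖`: replacing one factor of `Φ`
costs `H ‖ν − ν̃‖` times the mass of the other factor, which the prefactor cancels, and
`|ρ⁻¹ − σ⁻¹| |Φ(ν, ν̃)| ≤ |σ − ρ| / (ρσ) · Hρσ` with `|ρ − σ| ≤ ‖ν − ν̃‖` (test against `1`).
-/

section TotalVariation

variable (μ μ' : Measure ℝ) [IsFiniteMeasure μ] [IsFiniteMeasure μ']

lemma bddAbove_range_tvDist :
    BddAbove (range fun g : {g : ℝ → ℝ // Measurable g ∧ ∀ x, |g x| ≤ 1} =>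
      |(∫ x, g.1 x ∂μ) - ∫ x, g.1 x ∂μ'|) := by
  refine ⟨μ.real univ + μ'.real univ, ?_⟩
  rintro _ ⟨⟨g, -, hg⟩, rfl⟩
  have hg' : ∀ x, ‖g x‖ ≤ 1 := fun x => (Real.norm_eq_abs _).trans_le (hg x)
  have hμ := norm_integral_le_of_norm_le_const (μ := μ) (ae_of_all _ hg')
  have hμ' := norm_integral_le_of_norm_le_const (μ := μ') (ae_of_all _ hg')
  rw [one_mul] at hμ hμ'
  exact (abs_sub _ _).trans (add_le_add hμ hμ')

lemma abs_integral_sub_le_tvDist {g : ℝ → ℝ} (hgm : Measurable g) (hg : ∀ x, |g x| ≤ 1) :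
    |(∫ x, g x ∂μ) - ∫ x, g x ∂μ'| ≤ tvDist μ μ' :=
  le_ciSup (bddAbove_range_tvDist μ μ') ⟨g, hgm, hg⟩

lemma tvDist_nonneg : 0 ≤ tvDist μ μ' :=
  (abs_nonneg _).trans <| abs_integral_sub_le_tvDist μ μ' measurable_zero fun _ => by simp

lemma abs_integral_sub_le_mul_tvDist {H : ℝ} {g : ℝ → ℝ} (hgm : Measurable g)
    (hg : ∀ x, |g x| ≤ H) :
    |(∫ x, g x ∂μ) - ∫ x, g x ∂μ'| ≤ H * tvDist μ μ' := by
  rcases ((abs_nonneg _).trans (hg 0)).eq_or_lt with rfl | hH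
  · simp [fun x => abs_nonpos_iff.1 (hg x)]
  have hscaled := abs_integral_sub_le_tvDist μ μ' (hgm.const_mul H⁻¹) fun x => by
    rw [abs_mul, abs_of_pos (inv_pos.2 hH), inv_mul_le_one₀ hH]
    exact hg x
  rwa [integral_const_mul, integral_const_mul, ← mul_sub, abs_mul, abs_of_pos (inv_pos.2 hH),
    inv_mul_le_iff₀ hH] at hscaled

lemma abs_measureReal_univ_sub_le_tvDist : |μ.real univ - μ'.real univ| ≤ tvDist μ μ' := by
  simpa using abs_integral_sub_le_tvDist μ μ' measurable_const fun _ => (abs_one).le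

end TotalVariation

section Product

variable {α : Type*} [MeasurableSpace α] (ξ : Measure α) [IsFiniteMeasure ξ]
  (μ μ' : Measure ℝ) [IsFiniteMeasure μ] [IsFiniteMeasure μ'] {H : ℝ}

lemma abs_integral_prod_sub_le_of_right {k : α × ℝ → ℝ} (hkm : Measurable k)
    (hk : ∀ p, |k p| ≤ H) :
    |(∫ p, k p ∂ξ.prod μ) - ∫ p, k p ∂ξ.prod μ'| ≤ H * tvDist μ μ' * ξ.real univ := by
  have hint : ∀ (ζ : Measure ℝ) [IsFiniteMeasure ζ], Integrable k (ξ.prod ζ) := fun ζ _ =>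
    .of_bound hkm.aestronglyMeasurable H (ae_of_all _ hk)
  rw [integral_prod _ (hint μ), integral_prod _ (hint μ'),
    ← integral_sub (hint μ).integral_prod_left (hint μ').integral_prod_left,
    ← Real.norm_eq_abs]
  refine norm_integral_le_of_norm_le_const (ae_of_all _ fun x => ?_)
  exact abs_integral_sub_le_mul_tvDist μ μ' (hkm.comp measurable_prodMk_left) fun y => hk (x, y)

lemma abs_integral_prod_sub_le_of_left {k : ℝ × α → ℝ} (hkm : Measurable k)
    (hk : ∀ p, |k p| ≤ H) :
    |(∫ p, k p ∂μ.prod ξ) - ∫ p, k p ∂μ'.prod ξ| ≤ H * tvDist μ μ' * ξ.real univ := by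
  rw [← integral_prod_swap (μ := μ) k, ← integral_prod_swap (μ := μ') k]
  exact abs_integral_prod_sub_le_of_right ξ μ μ' (hkm.comp measurable_swap) fun p => hk p.swap

end Product

lemma abs_integral_prod_le {α β : Type*} [MeasurableSpace α] [MeasurableSpace β]
    (μ : Measure α) (ξ : Measure β) [IsFiniteMeasure μ] [IsFiniteMeasure ξ] {H : ℝ}
    {k : α × β → ℝ} (hk : ∀ p, |k p| ≤ H) :
    |∫ p, k p ∂μ.prod ξ| ≤ H * (μ.real univ * ξ.real univ) := by
  rw [← measureReal_prod_prod, univ_prod_univ]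
  exact norm_integral_le_of_norm_le_const <|
    ae_of_all _ fun p => (Real.norm_eq_abs _).trans_le (hk p)

lemma abs_inv_mul_le_of_abs_le_mul {ρ D C : ℝ} (hρ : 0 ≤ ρ) (hC : 0 ≤ C) (hD : |D| ≤ C * ρ) :
    |ρ⁻¹ * D| ≤ C := by
  rw [abs_mul, abs_of_nonneg (inv_nonneg.2 hρ)]
  calc ρ⁻¹ * |D| ≤ ρ⁻¹ * (C * ρ) := mul_le_mul_of_nonneg_left hD (inv_nonneg.2 hρ)
    _ = C * (ρ⁻¹ * ρ) := by ring
    _ ≤ C := mul_le_of_le_one_right hC inv_mul_le_one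

lemma abs_inv_sub_inv_mul_le {ρ σ D C : ℝ} (hρ : 0 ≤ ρ) (hσ : 0 ≤ σ) (hC : 0 ≤ C)
    (hD : |D| ≤ C * (ρ * σ)) :
    |(ρ⁻¹ - σ⁻¹) * D| ≤ C * |ρ - σ| := by
  rcases hρ.eq_or_lt with rfl | hρ
  · simp_all; positivity
  rcases hσ.eq_or_lt with rfl | hσ
  · simp_all; positivity
  have hinv : ρ⁻¹ - σ⁻¹ = (σ - ρ) / (ρ * σ) := by field_simp
  rw [hinv, abs_mul, abs_div, abs_of_pos (mul_pos hρ hσ), abs_sub_comm, div_mul_eq_mul_div,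
    div_le_iff₀ (mul_pos hρ hσ)]
  nlinarith [mul_le_mul_of_nonneg_left hD (abs_nonneg (ρ - σ))]

lemma B0_of_isFiniteMeasure (ν : Measure ℝ) [IsFiniteMeasure ν] :
    B0 ν = Measure.map (fun p : ℝ × ℝ => (p.1 + p.2) / 2) ((ν univ)⁻¹ • ν.prod ν) :=
  dif_pos ‹_›

lemma integral_B0 (ν : Measure ℝ) [IsFiniteMeasure ν] {h : ℝ → ℝ} (hm : Measurable h) :
    ∫ x, h x ∂(B0 ν) = (ν.real univ)⁻¹ * ∫ p, h ((p.1 + p.2) / 2) ∂ν.prod ν := by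
  rw [B0_of_isFiniteMeasure, integral_map (by fun_prop) hm.aestronglyMeasurable,
    integral_smul_measure, ENNReal.toReal_inv, smul_eq_mul, measureReal_def]

theorem B0_tv_contraction_general (ν νt : Measure ℝ) [IsFiniteMeasure ν] [IsFiniteMeasure νt]
    (H : ℝ) (h : ℝ → ℝ) (hmeas : Measurable h) (hb : ∀ x, |h x| ≤ H) :
    |(∫ x, h x ∂(B0 ν)) - ∫ x, h x ∂(B0 νt)| ≤ 3 * H * tvDist ν νt := by
  set k : ℝ × ℝ → ℝ := fun p => h ((p.1 + p.2) / 2)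
  have hkm : Measurable k := hmeas.comp (by fun_prop)
  have hk : ∀ p, |k p| ≤ H := fun p => hb _
  have hH : 0 ≤ H := (abs_nonneg _).trans (hb 0)
  have htv : 0 ≤ H * tvDist ν νt := mul_nonneg hH (tvDist_nonneg ν νt)
  rw [integral_B0 ν hmeas, integral_B0 νt hmeas]
  set I := ∫ p, k p ∂ν.prod ν
  set J := ∫ p, k p ∂ν.prod νt
  set I' := ∫ p, k p ∂νt.prod νt
  set ρ := ν.real univ
  set σ := νt.real univ
  have hright : |ρ⁻¹ * (I - J)| ≤ H * tvDist ν νt := abs_inv_mul_le_of_abs_le_mul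
    measureReal_nonneg htv (abs_integral_prod_sub_le_of_right ν ν νt hkm hk)
  have hleft : |σ⁻¹ * (J - I')| ≤ H * tvDist ν νt := abs_inv_mul_le_of_abs_le_mul
    measureReal_nonneg htv (abs_integral_prod_sub_le_of_left νt ν νt hkm hk)
  have hmass : |(ρ⁻¹ - σ⁻¹) * J| ≤ H * tvDist ν νt :=
    (abs_inv_sub_inv_mul_le measureReal_nonneg measureReal_nonneg hH
      (abs_integral_prod_le ν νt hk)).trans
      (mul_le_mul_of_nonneg_left (abs_measureReal_univ_sub_le_tvDist ν νt) hH)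
  calc |ρ⁻¹ * I - σ⁻¹ * I'| = |ρ⁻¹ * (I - J) + σ⁻¹ * (J - I') + (ρ⁻¹ - σ⁻¹) * J| := by
        congr 1; ring
    _ ≤ 3 * H * tvDist ν νt := by
        linarith [abs_add_three (ρ⁻¹ * (I - J)) (σ⁻¹ * (J - I')) ((ρ⁻¹ - σ⁻¹) * J)]

/-- **TV-contraction estimate for `B₀`.** For finite nonnegative measures `ν, ν̃` and any
measurable `h` with `|h| ≤ H`, one has
`|∫ h dB₀[ν] − ∫ h dB₀[ν̃]| ≤ 3 H ‖ν − ν̃‖_TV`. -/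
theorem B0_tv_contraction (ν νt : Measure ℝ) [IsFiniteMeasure ν] [IsFiniteMeasure νt]
    (H : ℝ) (hH : 0 < H) (h : ℝ → ℝ) (hmeas : Measurable h) (hb : ∀ x, |h x| ≤ H) :
    |(∫ x, h x ∂(B0 ν)) - ∫ x, h x ∂(B0 νt)| ≤ 3 * H * tvDist ν νt :=
  B0_tv_contraction_general ν νt H h hmeas hb
end

section
/- Let ν ∈ M₊(ℝ) and k ∈ ℕ. Then ∫_ℝ |x|ᵏ B₀[ν](dx) ≤ ∫_ℝ |x|ᵏ ν(dx). Moreover, if ∫_ℝ |x|ᵏ ν(dx) < ∞ and ν has positive mass, then all moments μ_j(B₀[ν]) for j ≤ k are well defined and μ_k(B₀[ν]) = Σ_{j=0}^{k} (k choose j) · μ_j(ν) μ_{k−j}(ν) / (2ᵏ μ₀(ν)). -/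
open MeasureTheory Set Filter

open scoped ENNReal

private lemma B0_half_pow_le (x y : ℝ) (hx : 0 ≤ x) (hy : 0 ≤ y) (j : ℕ) :
    ((x + y) / 2) ^ j ≤ (x ^ j + y ^ j) / 2 := by
  have h := (convexOn_pow j).2 (Set.mem_Ici.2 hx) (Set.mem_Ici.2 hy)
    (by norm_num : (0:ℝ) ≤ 1/2) (by norm_num : (0:ℝ) ≤ 1/2) (by norm_num)
  simp only [smul_eq_mul] at h
  calc ((x + y) / 2) ^ j = (1/2 * x + 1/2 * y) ^ j := by ring_nf
    _ ≤ 1/2 * x ^ j + 1/2 * y ^ j := h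
    _ = (x ^ j + y ^ j) / 2 := by ring

private lemma B0_abs_half_pow_le (a b : ℝ) (j : ℕ) :
    |(a + b) / 2| ^ j ≤ (|a| ^ j + |b| ^ j) / 2 := by
  have h1 : |(a + b) / 2| ≤ (|a| + |b|) / 2 := by
    rw [abs_div, abs_two]
    exact div_le_div_of_nonneg_right (abs_add_le a b) (by norm_num)
  calc |(a + b) / 2| ^ j ≤ ((|a| + |b|) / 2) ^ j :=
        pow_le_pow_left₀ (abs_nonneg _) h1 j
    _ ≤ (|a| ^ j + |b| ^ j) / 2 := B0_half_pow_le _ _ (abs_nonneg a) (abs_nonneg b) j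

private lemma B0_eq_aux (ν : Measure ℝ) [h : IsFiniteMeasure ν] :
    B0 ν = Measure.map (fun p : ℝ × ℝ => (p.1 + p.2) / 2)
      ((ν Set.univ)⁻¹ • ν.prod ν) := by
  unfold B0; rw [dif_pos h]

private lemma B0_lint_le (ν : Measure ℝ) [IsFiniteMeasure ν] (j : ℕ) :
    ∫⁻ x, ENNReal.ofReal (|x| ^ j) ∂(B0 ν) ≤ ∫⁻ x, ENNReal.ofReal (|x| ^ j) ∂ν := by
  set g : ℝ → ℝ≥0∞ := fun x => ENNReal.ofReal (|x| ^ j) with hgdef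
  have hg : Measurable g := (measurable_abs.pow_const j).ennreal_ofReal
  have hf : Measurable (fun p : ℝ × ℝ => (p.1 + p.2) / 2) :=
    (measurable_fst.add measurable_snd).div_const 2
  set M := ∫⁻ x, g x ∂ν with hM
  set ρ := ν Set.univ with hρ
  rw [B0_eq_aux ν, lintegral_map hg hf, lintegral_smul_measure]
  have h1 : ∫⁻ p : ℝ × ℝ, g ((p.1 + p.2) / 2) ∂(ν.prod ν)
      ≤ ∫⁻ p : ℝ × ℝ, (g p.1 + g p.2) * 2⁻¹ ∂(ν.prod ν) := by
    refine lintegral_mono fun p => ?_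
    have h2 := B0_abs_half_pow_le p.1 p.2 j
    have h3 : ENNReal.ofReal (|(p.1 + p.2) / 2| ^ j)
        ≤ ENNReal.ofReal ((|p.1| ^ j + |p.2| ^ j) / 2) := ENNReal.ofReal_le_ofReal h2
    refine h3.trans_eq ?_
    rw [ENNReal.ofReal_div_of_pos (by norm_num),
      ENNReal.ofReal_add (pow_nonneg (abs_nonneg _) _) (pow_nonneg (abs_nonneg _) _),
      div_eq_mul_inv]
    norm_num
    simp only [hgdef, ENNReal.ofReal_pow (abs_nonneg p.1), ENNReal.ofReal_pow (abs_nonneg p.2)]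
  have hg1 : Measurable fun p : ℝ × ℝ => g p.1 := hg.comp measurable_fst
  have hg2 : Measurable fun p : ℝ × ℝ => g p.2 := hg.comp measurable_snd
  have h4 : ∫⁻ p : ℝ × ℝ, (g p.1 + g p.2) * 2⁻¹ ∂(ν.prod ν) = M * ρ := by
    rw [lintegral_mul_const (f := fun p : ℝ × ℝ => g p.1 + g p.2) _ (hg1.add hg2), lintegral_add_left hg1]
    have ha : ∫⁻ p : ℝ × ℝ, g p.1 ∂(ν.prod ν) = M * ρ := by
      rw [lintegral_prod _ hg1.aemeasurable]
      simp only [lintegral_const]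
      rw [lintegral_mul_const _ hg]
    have hb : ∫⁻ p : ℝ × ℝ, g p.2 ∂(ν.prod ν) = M * ρ := by
      rw [lintegral_prod _ hg2.aemeasurable]
      simp only [lintegral_const]
      rfl
    rw [ha, hb, ← two_mul, mul_comm (2 : ℝ≥0∞), mul_assoc,
      ENNReal.mul_inv_cancel two_ne_zero ENNReal.ofNat_ne_top, mul_one]
  calc ρ⁻¹ * ∫⁻ p : ℝ × ℝ, g ((p.1 + p.2) / 2) ∂(ν.prod ν)
      ≤ ρ⁻¹ * (M * ρ) := mul_le_mul_right (h1.trans_eq h4) _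
    _ = (ρ⁻¹ * ρ) * M := by ring
    _ ≤ 1 * M := mul_le_mul_left (ENNReal.inv_mul_le_one ρ) M
    _ = M := one_mul M

private lemma B0_lint_lt_top (ν : Measure ℝ) [IsFiniteMeasure ν] {k : ℕ}
    (hk : (∫⁻ x, ENNReal.ofReal (|x| ^ k) ∂ν) < ⊤) {j : ℕ} (hj : j ≤ k) :
    (∫⁻ x, ENNReal.ofReal (|x| ^ j) ∂ν) < ⊤ := by
  have hle : ∀ x : ℝ, ENNReal.ofReal (|x| ^ j) ≤ 1 + ENNReal.ofReal (|x| ^ k) := by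
    intro x
    rcases le_or_gt |x| 1 with h | h
    · have : |x| ^ j ≤ 1 := pow_le_one₀ (abs_nonneg x) h
      calc ENNReal.ofReal (|x| ^ j) ≤ ENNReal.ofReal 1 := ENNReal.ofReal_le_ofReal this
        _ = 1 := ENNReal.ofReal_one
        _ ≤ _ := le_self_add
    · exact le_add_left (ENNReal.ofReal_le_ofReal (pow_le_pow_right₀ h.le hj))
  calc (∫⁻ x, ENNReal.ofReal (|x| ^ j) ∂ν)
      ≤ ∫⁻ x, 1 + ENNReal.ofReal (|x| ^ k) ∂ν := lintegral_mono hle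
    _ = ν Set.univ + ∫⁻ x, ENNReal.ofReal (|x| ^ k) ∂ν := by
        rw [lintegral_add_left measurable_const, lintegral_const, one_mul]
    _ < ⊤ := ENNReal.add_lt_top.2 ⟨measure_lt_top ν _, hk⟩

private lemma B0_integrable_pow (μ : Measure ℝ) (j : ℕ)
    (hfin : (∫⁻ x, ENNReal.ofReal (|x| ^ j) ∂μ) < ⊤) :
    Integrable (fun x : ℝ => x ^ j) μ := by
  refine ⟨(measurable_id.pow_const j).aestronglyMeasurable, ?_⟩
  have he : ∀ x : ℝ, ‖x ^ j‖ₑ = ENNReal.ofReal (|x| ^ j) := fun x => by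
    rw [← ofReal_norm, Real.norm_eq_abs, abs_pow]
  rw [HasFiniteIntegral]
  simpa only [he] using hfin

private lemma B0_integral_pow (ν : Measure ℝ) [IsFiniteMeasure ν] (k : ℕ)
    (hint : ∀ j ≤ k, Integrable (fun x : ℝ => x ^ j) ν) :
    (∫ x, x ^ k ∂(B0 ν)) = ∑ j ∈ Finset.range (k + 1),
        (k.choose j : ℝ) * (∫ x, x ^ j ∂ν) * (∫ x, x ^ (k - j) ∂ν)
          / (2 ^ k * (ν Set.univ).toReal) := by
  have hf : Measurable (fun p : ℝ × ℝ => (p.1 + p.2) / 2) :=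
    (measurable_fst.add measurable_snd).div_const 2
  have hsm : AEStronglyMeasurable (fun x : ℝ => x ^ k)
      (Measure.map (fun p : ℝ × ℝ => (p.1 + p.2) / 2) ((ν Set.univ)⁻¹ • ν.prod ν)) :=
    (measurable_id.pow_const k).aestronglyMeasurable
  rw [B0_eq_aux ν, integral_map hf.aemeasurable hsm, integral_smul_measure]
  have hexp : ∀ p : ℝ × ℝ, ((p.1 + p.2) / 2) ^ k
      = (∑ j ∈ Finset.range (k + 1),
          p.1 ^ j * p.2 ^ (k - j) * (k.choose j : ℝ)) / 2 ^ k := by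
    intro p; rw [div_pow, add_pow]
  have hterm : ∀ j ∈ Finset.range (k + 1),
      Integrable (fun p : ℝ × ℝ => p.1 ^ j * p.2 ^ (k - j) * (k.choose j : ℝ))
        (ν.prod ν) := by
    intro j hj
    have hj' : j ≤ k := Nat.lt_succ_iff.1 (Finset.mem_range.1 hj)
    exact ((hint j hj').mul_prod (hint (k - j) (Nat.sub_le _ _))).mul_const _
  have hJ : ∫ p : ℝ × ℝ, ((p.1 + p.2) / 2) ^ k ∂(ν.prod ν)
      = (∑ j ∈ Finset.range (k + 1),
          (∫ x, x ^ j ∂ν) * (∫ x, x ^ (k - j) ∂ν) * (k.choose j : ℝ)) / 2 ^ k := by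
    simp only [hexp]
    rw [integral_div, integral_finset_sum _ hterm]
    congr 1
    refine Finset.sum_congr rfl fun j hj => ?_
    rw [integral_mul_const]
    exact congrArg (· * (k.choose j : ℝ))
      (integral_prod_mul (fun x : ℝ => x ^ j) fun x : ℝ => x ^ (k - j))
  rw [hJ, smul_eq_mul, ENNReal.toReal_inv, div_eq_mul_inv, Finset.sum_mul,
    Finset.mul_sum]
  exact Finset.sum_congr rfl fun j _ => by ring

/-- **Moments of `B₀[ν]`.** For a finite nonnegative measure `ν` and `k ∈ ℕ`:
`∫ |x|^k dB₀[ν] ≤ ∫ |x|^k dν`; moreover, if `∫ |x|^k dν < ∞` and `ν` has positive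
mass, all moments of `B₀[ν]` up to order `k` are well defined and
`μ_k(B₀[ν]) = Σ_{j=0}^k (k choose j) μ_j(ν) μ_{k−j}(ν) / (2^k μ₀(ν))`. -/
theorem B0_moments (ν : Measure ℝ) [IsFiniteMeasure ν] (k : ℕ) :
    ((∫⁻ x, ENNReal.ofReal (|x| ^ k) ∂(B0 ν)) ≤ ∫⁻ x, ENNReal.ofReal (|x| ^ k) ∂ν) ∧
    ((∫⁻ x, ENNReal.ofReal (|x| ^ k) ∂ν) < ⊤ → ν Set.univ ≠ 0 →
      (∀ j ≤ k, Integrable (fun x : ℝ => x ^ j) (B0 ν)) ∧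
      (∫ x, x ^ k ∂(B0 ν)) = ∑ j ∈ Finset.range (k + 1),
        (k.choose j : ℝ) * (∫ x, x ^ j ∂ν) * (∫ x, x ^ (k - j) ∂ν)
          / (2 ^ k * (ν Set.univ).toReal)) := by
  refine ⟨B0_lint_le ν k, fun hk hρ => ?_⟩
  have hintν : ∀ j ≤ k, Integrable (fun x : ℝ => x ^ j) ν := fun j hj =>
    B0_integrable_pow ν j (B0_lint_lt_top ν hk hj)
  refine ⟨fun j hj => B0_integrable_pow (B0 ν) j
    ((B0_lint_le ν j).trans_lt (B0_lint_lt_top ν hk hj)), ?_⟩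
  exact B0_integral_pow ν k hintν
end

section
/- Let m : ℝ → ℝ be measurable and bounded below by −K with K ≥ 0, let f⁰ ∈ M₊(ℝ), and let f be the weak solution of the model with initial datum f⁰. If for some k ∈ ℕ one has ∫_ℝ |x|ᵏ f⁰(dx) < ∞, then for all t ≥ 0: ∫_ℝ |x|ᵏ f(t,dx) ≤ e^{(K+1)t} ∫_ℝ |x|ᵏ f⁰(dx). -/
open MeasureTheory Set Filter

open ENNReal Real
open scoped Nat

/-!
Testing Duhamel's formula against `g` and using `m ≥ -K` gives
`∫ g df(t) ≤ e^{Kt} ∫ g df⁰ + c ∫₀ᵗ e^{K(t-s)} ∫ g df(s) ds` whenever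
`2 g((a+b)/2) ≤ c (g a + g b)`, because then `∫ g dB₀[ν] ≤ c ∫ g dν`. Convexity of `|x|^k` gives
this with `c = 1`, and Gronwall's lemma yields the factor `e^{(K+1)t}`.

Gronwall's lemma needs the moment to be finite on `[0, T]` a priori. The truncations
`min(|x|, R)^k` satisfy the midpoint inequality with `c = 2` and are bounded by `R^k` times the
total mass, which is bounded on `[0, T]` by continuity in total variation; so they grow at most
like `e^{(K+2)t}`, uniformly in `R`, and monotone convergence bounds the full moment.
-/

lemma two_mul_abs_midpoint_pow_le (k : ℕ) (a b : ℝ) :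
    2 * |(a + b) / 2| ^ k ≤ |a| ^ k + |b| ^ k := by
  have hconv := (convexOn_pow k).2 (abs_nonneg a) (abs_nonneg b)
    (by norm_num : (0 : ℝ) ≤ 1 / 2) (by norm_num : (0 : ℝ) ≤ 1 / 2) (by norm_num)
  simp only [smul_eq_mul] at hconv
  have hmid : |(a + b) / 2| ≤ 1 / 2 * |a| + 1 / 2 * |b| := by
    rw [abs_div, abs_two]; linarith [abs_add_le a b]
  linarith [pow_le_pow_left₀ (abs_nonneg _) hmid k]

lemma min_abs_midpoint_pow_le (k : ℕ) {R : ℝ} (hR : 0 ≤ R) (a b : ℝ) :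
    min |(a + b) / 2| R ^ k ≤ min |a| R ^ k + min |b| R ^ k := by
  have hmid : |(a + b) / 2| ≤ max |a| |b| := by
    rw [abs_div, abs_two]; linarith [abs_add_le a b, le_max_left |a| |b|, le_max_right |a| |b|]
  have hmin : min |(a + b) / 2| R ≤ max (min |a| R) (min |b| R) := by
    rw [← min_max_distrib_right]; exact min_le_min_right R hmid
  calc min |(a + b) / 2| R ^ k ≤ max (min |a| R) (min |b| R) ^ k :=
        pow_le_pow_left₀ (by positivity) hmin k
    _ ≤ min |a| R ^ k + min |b| R ^ k := by
        rcases le_total (min |a| R) (min |b| R) with h | h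
        · rw [max_eq_right h]; exact le_add_of_nonneg_left (by positivity)
        · rw [max_eq_left h]; exact le_add_of_nonneg_right (by positivity)

lemma ofReal_exp_mul_ofReal_exp (a b : ℝ) :
    ENNReal.ofReal (exp a) * ENNReal.ofReal (exp b) = ENNReal.ofReal (exp (a + b)) := by
  rw [← ENNReal.ofReal_mul (exp_pos a).le, exp_add]

lemma lintegral_Icc_ofReal_eq_sub_of_hasDerivAt {g G : ℝ → ℝ} {t : ℝ} (ht : 0 ≤ t)
    (hg : Continuous g) (hg_nonneg : ∀ s ∈ Icc 0 t, 0 ≤ g s) (hG : ∀ s, HasDerivAt G (g s) s) :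
    ∫⁻ s in Icc 0 t, ENNReal.ofReal (g s) = ENNReal.ofReal (G t - G 0) := by
  rw [← ofReal_integral_eq_lintegral_ofReal hg.integrableOn_Icc
    ((ae_restrict_iff' measurableSet_Icc).2 (ae_of_all _ hg_nonneg)),
    integral_Icc_eq_integral_Ioc, ← intervalIntegral.integral_of_le ht,
    intervalIntegral.integral_eq_sub_of_hasDerivAt (fun s _ => hG s) (hg.intervalIntegrable 0 t)]

lemma lintegral_Icc_ofReal_mul_exp_mul {L t : ℝ} (hL : 0 ≤ L) (ht : 0 ≤ t) :
    ∫⁻ s in Icc 0 t, ENNReal.ofReal (L * exp (L * s)) = ENNReal.ofReal (exp (L * t) - 1) := by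
  rw [lintegral_Icc_ofReal_eq_sub_of_hasDerivAt (G := fun s => exp (L * s)) ht (by fun_prop)
    (fun s _ => by positivity), mul_zero, exp_zero]
  intro s
  simpa [mul_comm] using ((hasDerivAt_id s).const_mul L).exp

lemma lintegral_Icc_ofReal_mul_pow_div_factorial {L t : ℝ} (hL : 0 ≤ L) (ht : 0 ≤ t) (n : ℕ) :
    ∫⁻ s in Icc 0 t, ENNReal.ofReal (L * ((L * s) ^ n / n !)) =
      ENNReal.ofReal ((L * t) ^ (n + 1) / (n + 1)!) := by
  rw [lintegral_Icc_ofReal_eq_sub_of_hasDerivAt (G := fun s => (L * s) ^ (n + 1) / (n + 1)!) ht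
    (by fun_prop) (fun s hs => by have := hs.1; positivity)]
  · simp
  intro s
  refine ((((hasDerivAt_id s).const_mul L).fun_pow (n + 1)).div_const ((n + 1)! : ℝ)).congr_deriv ?_
  rw [Nat.factorial_succ]
  push_cast
  field_simp
  simp

lemma le_ofReal_exp_mul_of_le_add_lintegral {L T : ℝ} (hL : 0 ≤ L) {u : ℝ → ℝ≥0∞}
    {B C : ℝ≥0∞} (hB : B ≠ ∞) (hu_le : ∀ s ∈ Icc 0 T, u s ≤ B)
    (hu : ∀ t ∈ Icc 0 T, u t ≤ C + ENNReal.ofReal L * ∫⁻ s in Icc 0 t, u s)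
    {t : ℝ} (ht : t ∈ Icc 0 T) :
    u t ≤ ENNReal.ofReal (exp (L * t)) * C := by
  have hiter : ∀ n : ℕ, ∀ t ∈ Icc 0 T,
      u t ≤ ENNReal.ofReal (exp (L * t)) * C + B * ENNReal.ofReal ((L * t) ^ n / n !) := by
    intro n
    induction n with
    | zero => simpa using fun t ht => le_add_left (hu_le t ht)
    | succ n ih =>
      intro t ht
      have hLt : 1 ≤ exp (L * t) := one_le_exp (mul_nonneg hL ht.1)
      calc u t ≤ C + ENNReal.ofReal L * ∫⁻ s in Icc 0 t, u s := hu t ht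
        _ ≤ C + ∫⁻ s in Icc 0 t, (ENNReal.ofReal (L * exp (L * s)) * C
              + B * ENNReal.ofReal (L * ((L * s) ^ n / n !))) := by
            rw [← lintegral_const_mul' _ _ ofReal_ne_top]
            refine add_le_add le_rfl (setLIntegral_mono (by fun_prop) fun s hs => ?_)
            rw [ENNReal.ofReal_mul hL, ENNReal.ofReal_mul hL, mul_comm B, mul_assoc, mul_assoc,
              ← mul_add, mul_comm _ B]
            gcongr
            exact ih s ⟨hs.1, hs.2.trans ht.2⟩
        _ = C + ENNReal.ofReal (exp (L * t) - 1) * C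
              + B * ENNReal.ofReal ((L * t) ^ (n + 1) / (n + 1)!) := by
            rw [lintegral_add_left (by fun_prop), lintegral_mul_const _ (by fun_prop),
              lintegral_const_mul _ (by fun_prop), lintegral_Icc_ofReal_mul_exp_mul hL ht.1,
              lintegral_Icc_ofReal_mul_pow_div_factorial hL ht.1, add_assoc]
        _ = ENNReal.ofReal (exp (L * t)) * C
              + B * ENNReal.ofReal ((L * t) ^ (n + 1) / (n + 1)!) := by
            rw [← one_add_mul, ← ENNReal.ofReal_one, ← ENNReal.ofReal_add zero_le_one
              (by linarith), add_sub_cancel]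
  have hlim : Tendsto (fun n : ℕ => ENNReal.ofReal (exp (L * t)) * C
      + B * ENNReal.ofReal ((L * t) ^ n / n !)) atTop
      (nhds (ENNReal.ofReal (exp (L * t)) * C)) := by
    have := ENNReal.tendsto_ofReal (FloorSemiring.tendsto_pow_div_factorial_atTop (L * t))
    simpa using (ENNReal.Tendsto.const_mul this (Or.inr hB)).const_add
      (ENNReal.ofReal (exp (L * t)) * C)
  exact ge_of_tendsto' hlim fun n => hiter n t ht

lemma le_ofReal_exp_mul_of_le_exp_add_lintegral {K L T : ℝ} (hK : 0 ≤ K) (hL : 0 ≤ L)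
    {u : ℝ → ℝ≥0∞} {B C : ℝ≥0∞} (hB : B ≠ ∞) (hu_le : ∀ s ∈ Icc 0 T, u s ≤ B)
    (hu : ∀ t ∈ Icc 0 T, u t ≤ ENNReal.ofReal (exp (K * t)) * C
      + ENNReal.ofReal L * ∫⁻ s in Icc 0 t, ENNReal.ofReal (exp (K * (t - s))) * u s)
    {t : ℝ} (ht : t ∈ Icc 0 T) :
    u t ≤ ENNReal.ofReal (exp ((K + L) * t)) * C := by
  -- `v = e^{-Ks} u` satisfies the recurrence without the exponential weights.
  set v : ℝ → ℝ≥0∞ := fun s => ENNReal.ofReal (exp (-K * s)) * u s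
  have hcancel : ∀ s, ENNReal.ofReal (exp (K * s)) * ENNReal.ofReal (exp (-K * s)) = 1 := by
    simp [ofReal_exp_mul_ofReal_exp]
  have hv_le : ∀ s ∈ Icc 0 T, v s ≤ B := fun s hs =>
    calc v s ≤ 1 * u s := by
          show ENNReal.ofReal _ * u s ≤ 1 * u s
          gcongr
          rw [← ENNReal.ofReal_one, ← exp_zero]
          exact ENNReal.ofReal_le_ofReal (exp_le_exp.2 (by nlinarith [hs.1]))
      _ ≤ B := (one_mul (u s)).trans_le (hu_le s hs)
  have hv : ∀ t ∈ Icc 0 T, v t ≤ C + ENNReal.ofReal L * ∫⁻ s in Icc 0 t, v s := by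
    intro t ht
    calc v t ≤ ENNReal.ofReal (exp (-K * t)) * (ENNReal.ofReal (exp (K * t)) * C
          + ENNReal.ofReal L * ∫⁻ s in Icc 0 t, ENNReal.ofReal (exp (K * (t - s))) * u s) :=
          mul_le_mul_right (hu t ht) _
      _ = C + ENNReal.ofReal L * ∫⁻ s in Icc 0 t, v s := by
        rw [mul_add, ← mul_assoc, mul_comm (ENNReal.ofReal _), hcancel, one_mul, mul_left_comm,
          ← lintegral_const_mul' _ _ ofReal_ne_top]
        congr 2
        refine lintegral_congr fun s => ?_
        rw [← mul_assoc, ofReal_exp_mul_ofReal_exp]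
        congr 3
        ring
  calc u t = ENNReal.ofReal (exp (K * t)) * v t := by
        simp only [v, ← mul_assoc, hcancel, one_mul]
    _ ≤ ENNReal.ofReal (exp (K * t)) * (ENNReal.ofReal (exp (L * t)) * C) := by
        gcongr; exact le_ofReal_exp_mul_of_le_add_lintegral hL hB hv_le hv ht
    _ = ENNReal.ofReal (exp ((K + L) * t)) * C := by
        rw [← mul_assoc, ofReal_exp_mul_ofReal_exp, add_mul]

lemma lintegral_B0_le (ν : Measure ℝ) {h : ℝ → ℝ≥0∞} (hh : Measurable h) {c : ℝ≥0∞}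
    (hc : ∀ a b, 2 * h ((a + b) / 2) ≤ c * (h a + h b)) :
    ∫⁻ x, h x ∂B0 ν ≤ c * ∫⁻ x, h x ∂ν := by
  unfold B0
  split_ifs
  · rw [lintegral_map hh (by fun_prop), lintegral_smul_measure]
    have hprod : 2 * ∫⁻ p, h ((p.1 + p.2) / 2) ∂ν.prod ν ≤ 2 * (ν univ * (c * ∫⁻ x, h x ∂ν)) :=
      calc 2 * ∫⁻ p, h ((p.1 + p.2) / 2) ∂ν.prod ν
          ≤ ∫⁻ p, c * (h p.1 + h p.2) ∂ν.prod ν := by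
            rw [← lintegral_const_mul' _ _ ofNat_ne_top]
            exact lintegral_mono fun p => hc p.1 p.2
        _ = 2 * (ν univ * (c * ∫⁻ x, h x ∂ν)) := by
            rw [lintegral_const_mul _ (by fun_prop), lintegral_add_left (by fun_prop),
              lintegral_prod _ (by fun_prop), lintegral_prod _ (by fun_prop)]
            simp only [lintegral_const, lintegral_mul_const _ hh]
            ring
    calc (ν univ)⁻¹ * ∫⁻ p, h ((p.1 + p.2) / 2) ∂ν.prod ν
        ≤ (ν univ)⁻¹ * (ν univ * (c * ∫⁻ x, h x ∂ν)) := by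
          gcongr
          exact (ENNReal.mul_le_mul_iff_right two_ne_zero ofNat_ne_top).1 hprod
      _ ≤ c * ∫⁻ x, h x ∂ν := by
          rw [← mul_assoc]
          exact mul_le_of_le_one_left' (ENNReal.inv_mul_le_one _)
  · simp

lemma mul_setLIntegral_le_lintegral_indicator_mul {X : Type*} [MeasurableSpace X] (μ : Measure X)
    (w : X → ℝ≥0∞) (c : ℝ≥0∞) {A : Set X} (hA : MeasurableSet A) :
    c * ∫⁻ x in A, w x ∂μ ≤ ∫⁻ x, A.indicator (fun _ => c) x * w x ∂μ := by
  simp_rw [← indicator_mul_left, lintegral_indicator hA]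
  exact lintegral_const_mul_le c w

section Mixture

variable {X S : Type*} [MeasurableSpace X] [MeasurableSpace S] {μ μ₀ : Measure X}
  {ρ : Measure S} {ν : S → Measure X} {w₀ : X → ℝ≥0∞} {w : S → X → ℝ≥0∞}

/-- Only an inequality, so that no measurability in `s` is needed: `∫⁻` is monotone and
superadditive without it. -/
theorem lintegral_le_of_measure_le_mixture
    (h : ∀ A, MeasurableSet A → μ A ≤ ∫⁻ x in A, w₀ x ∂μ₀ + ∫⁻ s, ∫⁻ x in A, w s x ∂ν s ∂ρ)
    {g : X → ℝ≥0∞} (hg : Measurable g) :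
    ∫⁻ x, g x ∂μ ≤ ∫⁻ x, g x * w₀ x ∂μ₀ + ∫⁻ s, ∫⁻ x, g x * w s x ∂ν s ∂ρ := by
  refine Measurable.ennreal_induction (motive := fun g =>
    ∫⁻ x, g x ∂μ ≤ ∫⁻ x, g x * w₀ x ∂μ₀ + ∫⁻ s, ∫⁻ x, g x * w s x ∂ν s ∂ρ) ?_ ?_ ?_ hg
  · intro c A hA
    calc ∫⁻ x, A.indicator (fun _ => c) x ∂μ = c * μ A := lintegral_indicator_const hA c
      _ ≤ c * ∫⁻ x in A, w₀ x ∂μ₀ + c * ∫⁻ s, ∫⁻ x in A, w s x ∂ν s ∂ρ := by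
          rw [← mul_add]; gcongr; exact h A hA
      _ ≤ _ := add_le_add (mul_setLIntegral_le_lintegral_indicator_mul μ₀ w₀ c hA)
          ((lintegral_const_mul_le _ _).trans
            (lintegral_mono fun s => mul_setLIntegral_le_lintegral_indicator_mul _ _ c hA))
  · intro g₁ g₂ _ hg₁ _ ih₁ ih₂
    have hsuper : ∀ (μ' : Measure X) (w' : X → ℝ≥0∞),
        ∫⁻ x, g₁ x * w' x ∂μ' + ∫⁻ x, g₂ x * w' x ∂μ' ≤ ∫⁻ x, (g₁ + g₂) x * w' x ∂μ' :=
      fun μ' w' => (le_lintegral_add _ _).trans_eq (by simp only [Pi.add_apply, add_mul])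
    calc ∫⁻ x, (g₁ + g₂) x ∂μ = ∫⁻ x, g₁ x ∂μ + ∫⁻ x, g₂ x ∂μ := lintegral_add_left hg₁ _
      _ ≤ _ := add_le_add ih₁ ih₂
      _ ≤ _ := by
          rw [add_add_add_comm]
          exact add_le_add (hsuper μ₀ w₀)
            ((le_lintegral_add _ _).trans (lintegral_mono fun s => hsuper (ν s) (w s)))
  · intro g hg hmono ih
    rw [lintegral_iSup hg hmono]
    refine iSup_le fun n => (ih n).trans ?_
    gcongr <;> exact le_iSup (fun k => g k _) n

end Mixture

lemma abs_integral_le_measureReal_univ {α : Type*} [MeasurableSpace α] (μ : Measure α)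
    [IsFiniteMeasure μ] {h : α → ℝ} (hb : ∀ x, |h x| ≤ 1) : |∫ x, h x ∂μ| ≤ μ.real univ := by
  simpa using norm_integral_le_of_norm_le_const (μ := μ) (f := h) (C := 1) (ae_of_all _ hb)

lemma abs_integral_sub_le_tvDist_s4 (μ ν : Measure ℝ) [IsFiniteMeasure μ] [IsFiniteMeasure ν]
    {h : ℝ → ℝ} (hh : Measurable h) (hb : ∀ x, |h x| ≤ 1) :
    |∫ x, h x ∂μ - ∫ x, h x ∂ν| ≤ tvDist μ ν := by
  refine le_ciSup (f := fun g : {g : ℝ → ℝ // Measurable g ∧ ∀ x, |g x| ≤ 1} =>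
    |∫ x, g.1 x ∂μ - ∫ x, g.1 x ∂ν|) ⟨μ.real univ + ν.real univ, ?_⟩ ⟨h, hh, hb⟩
  rintro _ ⟨⟨g, -, hg⟩, rfl⟩
  exact (abs_sub _ _).trans
    (add_le_add (abs_integral_le_measureReal_univ μ hg) (abs_integral_le_measureReal_univ ν hg))

lemma lintegral_ofReal_abs_pow_eq_iSup (μ : Measure ℝ) (k : ℕ) :
    ∫⁻ x, ENNReal.ofReal (|x| ^ k) ∂μ = ⨆ n : ℕ, ∫⁻ x, ENNReal.ofReal (min |x| n ^ k) ∂μ := by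
  rw [← lintegral_iSup (fun n => by fun_prop) fun i j hij x => ?_]
  · refine lintegral_congr fun x => le_antisymm ?_ (iSup_le fun n => ?_)
    · obtain ⟨n, hn⟩ := exists_nat_ge |x|
      exact le_iSup_of_le n (by rw [min_eq_left hn])
    · exact ENNReal.ofReal_le_ofReal (pow_le_pow_left₀ (by positivity) (min_le_left _ _) k)
  · exact ENNReal.ofReal_le_ofReal
      (pow_le_pow_left₀ (by positivity) (min_le_min_left _ (by exact_mod_cast hij)) k)

namespace IsWeakSolution

variable {m : ℝ → ℝ} {f0 : Measure ℝ} {T K : ℝ} {f : ℝ → Measure ℝ}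

lemma continuousOn_measureReal_univ (hf : IsWeakSolution m f0 T f) :
    ContinuousOn (fun s => (f s).real univ) (Icc 0 T) := by
  intro t ht
  rw [ContinuousWithinAt, tendsto_iff_dist_tendsto_zero]
  refine squeeze_zero' (Eventually.of_forall fun s => dist_nonneg) ?_ (hf.2.1 t ht)
  filter_upwards [self_mem_nhdsWithin] with s hs
  have := hf.1 s hs
  have := hf.1 t ht
  simpa [Real.dist_eq] using
    abs_integral_sub_le_tvDist_s4 (f s) (f t) measurable_const (h := fun _ => 1) (by simp)

lemma exists_measure_univ_le (hf : IsWeakSolution m f0 T f) :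
    ∃ B : ℝ≥0∞, B ≠ ∞ ∧ ∀ s ∈ Icc 0 T, f s univ ≤ B := by
  obtain ⟨B, hB⟩ := isCompact_Icc.bddAbove_image hf.continuousOn_measureReal_univ
  refine ⟨ENNReal.ofReal B, ofReal_ne_top, fun s hs => ?_⟩
  have := hf.1 s hs
  rw [← ofReal_measureReal]
  exact ENNReal.ofReal_le_ofReal (hB (mem_image_of_mem _ hs))

lemma lintegral_le (hf : IsWeakSolution m f0 T f) (hm : ∀ x, -K ≤ m x) {g : ℝ → ℝ≥0∞}
    (hg : Measurable g) {L : ℝ} (hgL : ∀ a b, 2 * g ((a + b) / 2) ≤ ENNReal.ofReal L * (g a + g b))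
    {t : ℝ} (ht : t ∈ Icc 0 T) :
    ∫⁻ x, g x ∂f t ≤ ENNReal.ofReal (exp (K * t)) * ∫⁻ x, g x ∂f0
      + ENNReal.ofReal L *
        ∫⁻ s in Icc 0 t, ENNReal.ofReal (exp (K * (t - s))) * ∫⁻ x, g x ∂f s := by
  have hdecay : ∀ x, ∀ τ, 0 ≤ τ → ENNReal.ofReal (exp (-m x * τ)) ≤ ENNReal.ofReal (exp (K * τ)) :=
    fun x τ hτ => ENNReal.ofReal_le_ofReal (exp_le_exp.2 (by nlinarith [hm x]))
  refine (lintegral_le_of_measure_le_mixture (fun A hA => (hf.2.2 A hA t ht).le) hg).trans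
    (add_le_add ?_ ?_)
  · calc ∫⁻ x, g x * ENNReal.ofReal (exp (-m x * t)) ∂f0
        ≤ ∫⁻ x, g x * ENNReal.ofReal (exp (K * t)) ∂f0 :=
          lintegral_mono fun x => mul_le_mul_right (hdecay x t ht.1) _
      _ = _ := by rw [lintegral_mul_const _ hg, mul_comm]
  · rw [← lintegral_const_mul' _ _ ofReal_ne_top]
    refine setLIntegral_mono' measurableSet_Icc fun s hs => ?_
    calc ∫⁻ x, g x * ENNReal.ofReal (exp (-m x * (t - s))) ∂B0 (f s)
        ≤ ∫⁻ x, g x * ENNReal.ofReal (exp (K * (t - s))) ∂B0 (f s) :=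
          lintegral_mono fun x => mul_le_mul_right (hdecay x _ (sub_nonneg.2 hs.2)) _
      _ = ENNReal.ofReal (exp (K * (t - s))) * ∫⁻ x, g x ∂B0 (f s) := by
          rw [lintegral_mul_const _ hg, mul_comm]
      _ ≤ ENNReal.ofReal (exp (K * (t - s))) * (ENNReal.ofReal L * ∫⁻ x, g x ∂f s) := by
          gcongr; exact lintegral_B0_le (f s) hg hgL
      _ = _ := mul_left_comm _ _ _

lemma lintegral_min_abs_pow_le (hf : IsWeakSolution m f0 T f) (hK : 0 ≤ K)
    (hm : ∀ x, -K ≤ m x) (k : ℕ) {R : ℝ} (hR : 0 ≤ R) {t : ℝ} (ht : t ∈ Icc 0 T) :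
    ∫⁻ x, ENNReal.ofReal (min |x| R ^ k) ∂f t ≤
      ENNReal.ofReal (exp ((K + 2) * t)) * ∫⁻ x, ENNReal.ofReal (min |x| R ^ k) ∂f0 := by
  obtain ⟨B, hB, hmass⟩ := hf.exists_measure_univ_le
  refine le_ofReal_exp_mul_of_le_exp_add_lintegral hK zero_le_two
    (B := ENNReal.ofReal (R ^ k) * B) (mul_ne_top ofReal_ne_top hB) (fun s hs => ?_)
    (fun s hs => hf.lintegral_le hm (by fun_prop) (fun a b => ?_) hs) ht
  · calc ∫⁻ x, ENNReal.ofReal (min |x| R ^ k) ∂f s ≤ ∫⁻ _, ENNReal.ofReal (R ^ k) ∂f s :=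
          lintegral_mono fun x =>
            ENNReal.ofReal_le_ofReal (pow_le_pow_left₀ (by positivity) (min_le_right _ _) k)
      _ ≤ _ := by rw [lintegral_const]; gcongr; exact hmass s hs
  · rw [ENNReal.ofReal_ofNat]
    gcongr
    exact (ENNReal.ofReal_le_ofReal (min_abs_midpoint_pow_le k hR a b)).trans ENNReal.ofReal_add_le

lemma lintegral_abs_pow_le (hf : IsWeakSolution m f0 T f) (hK : 0 ≤ K) (hm : ∀ x, -K ≤ m x)
    (k : ℕ) (hmom : ∫⁻ x, ENNReal.ofReal (|x| ^ k) ∂f0 ≠ ∞) {t : ℝ} (ht : t ∈ Icc 0 T) :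
    ∫⁻ x, ENNReal.ofReal (|x| ^ k) ∂f t ≤
      ENNReal.ofReal (exp ((K + 1) * t)) * ∫⁻ x, ENNReal.ofReal (|x| ^ k) ∂f0 := by
  have hbound : ∀ s ∈ Icc 0 T, ∫⁻ x, ENNReal.ofReal (|x| ^ k) ∂f s ≤
      ENNReal.ofReal (exp ((K + 2) * T)) * ∫⁻ x, ENNReal.ofReal (|x| ^ k) ∂f0 := by
    intro s hs
    rw [lintegral_ofReal_abs_pow_eq_iSup]
    refine iSup_le fun n => (hf.lintegral_min_abs_pow_le hK hm k n.cast_nonneg hs).trans ?_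
    gcongr ?_ * ?_
    · exact ENNReal.ofReal_le_ofReal (exp_le_exp.2 (by nlinarith [hs.2]))
    · exact lintegral_mono fun x =>
        ENNReal.ofReal_le_ofReal (pow_le_pow_left₀ (by positivity) (min_le_left _ _) k)
  refine le_ofReal_exp_mul_of_le_exp_add_lintegral hK zero_le_one
    (mul_ne_top ofReal_ne_top hmom) hbound
    (fun s hs => hf.lintegral_le hm (by fun_prop) (fun a b => ?_) hs) ht
  rw [ENNReal.ofReal_one, one_mul, ← ENNReal.ofReal_ofNat 2, ← ENNReal.ofReal_mul zero_le_two,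
    ← ENNReal.ofReal_add (by positivity) (by positivity)]
  exact ENNReal.ofReal_le_ofReal (two_mul_abs_midpoint_pow_le k a b)

end IsWeakSolution

theorem moment_propagation_general (m : ℝ → ℝ)
    (K : ℝ) (hK : 0 ≤ K) (hbd : ∀ x, -K ≤ m x)
    (f0 : Measure ℝ)
    (f : ℝ → Measure ℝ) (hf : IsWeakSolutionGlobal m f0 f)
    (k : ℕ) (hmom : (∫⁻ x, ENNReal.ofReal (|x| ^ k) ∂f0) < ⊤) :
    ∀ t : ℝ, 0 ≤ t →
      (∫⁻ x, ENNReal.ofReal (|x| ^ k) ∂(f t))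
        ≤ ENNReal.ofReal (Real.exp ((K + 1) * t)) * ∫⁻ x, ENNReal.ofReal (|x| ^ k) ∂f0 := by
  intro t ht
  exact (hf (t + 1) (by linarith)).lintegral_abs_pow_le hK hbd k hmom.ne ⟨ht, by linarith⟩

/-- **Propagation of moments.** If `m ≥ −K` with `K ≥ 0` and the initial datum has a
finite moment of order `k`, then the weak solution satisfies
`∫ |x|^k f(t,dx) ≤ e^{(K+1)t} ∫ |x|^k f⁰(dx)` for all `t ≥ 0`. -/
theorem moment_propagation (m : ℝ → ℝ) (hm : Measurable m)
    (K : ℝ) (hK : 0 ≤ K) (hbd : ∀ x, -K ≤ m x)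
    (f0 : Measure ℝ) (hf0 : IsFiniteMeasure f0)
    (f : ℝ → Measure ℝ) (hf : IsWeakSolutionGlobal m f0 f)
    (k : ℕ) (hmom : (∫⁻ x, ENNReal.ofReal (|x| ^ k) ∂f0) < ⊤) :
    ∀ t : ℝ, 0 ≤ t →
      (∫⁻ x, ENNReal.ofReal (|x| ^ k) ∂(f t))
        ≤ ENNReal.ofReal (Real.exp ((K + 1) * t)) * ∫⁻ x, ENNReal.ofReal (|x| ^ k) ∂f0 :=
  moment_propagation_general m K hK hbd f0 f hf k hmom
end

section
/- Let m : ℝ → ℝ be locally Lipschitz and satisfy −K ≤ m(x) ≤ C(1+x²) for all x ∈ ℝ and some constants K, C ≥ 0. Then there exist a nonnegative function α : ℝ → [0,∞) which is bounded on every compact subset of ℝ, and a constant β ≥ 0, such that for all x, y ∈ ℝ: |m(x) − m(y)| ≤ α(y)|x−y| + β|x−y|². -/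
/-- **Quadratic modulus for locally Lipschitz selection rates.** If `m` is Lipschitz on
every compact interval `[−r, r]` and satisfies `−K ≤ m(x) ≤ C(1+x²)`, then there exist
a nonnegative function `α`, bounded on every compact set, and a constant `β ≥ 0`, with
`|m(x) − m(y)| ≤ α(y)|x−y| + β|x−y|²` for all `x, y`. -/
theorem quadratic_modulus (m : ℝ → ℝ) (K C : ℝ) (hK : 0 ≤ K) (hC : 0 ≤ C)
    (hlip : ∀ r : ℝ, 0 < r → ∃ L : ℝ, ∀ x ∈ Set.Icc (-r) r, ∀ y ∈ Set.Icc (-r) r,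
      |m x - m y| ≤ L * |x - y|)
    (hbd : ∀ x, -K ≤ m x ∧ m x ≤ C * (1 + x ^ 2)) :
    ∃ (α : ℝ → ℝ) (β : ℝ), (∀ y, 0 ≤ α y) ∧ 0 ≤ β ∧
      (∀ s : Set ℝ, IsCompact s → ∃ M : ℝ, ∀ y ∈ s, α y ≤ M) ∧
      ∀ x y : ℝ, |m x - m y| ≤ α y * |x - y| + β * |x - y| ^ 2 := by
  classical
  -- Lipschitz constant on [-(n+1), n+1]
  set A : ℕ → ℝ := fun n => max 0 ((hlip ((n : ℝ) + 1) (by positivity)).choose) with hA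
  have hAspec : ∀ n : ℕ, ∀ x ∈ Set.Icc (-((n : ℝ) + 1)) ((n : ℝ) + 1),
      ∀ y ∈ Set.Icc (-((n : ℝ) + 1)) ((n : ℝ) + 1), |m x - m y| ≤ A n * |x - y| := by
    intro n x hx y hy
    refine le_trans ((hlip ((n : ℝ) + 1) (by positivity)).choose_spec x hx y hy) ?_
    exact mul_le_mul_of_nonneg_right (le_max_right _ _) (abs_nonneg _)
  have hA0 : ∀ n, 0 ≤ A n := fun n => le_max_left _ _
  -- monotone envelope
  set B : ℕ → ℝ := fun n => Nat.rec (A 0) (fun k Bk => max Bk (A (k + 1))) n with hB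
  have hBsucc : ∀ n, B (n + 1) = max (B n) (A (n + 1)) := fun n => rfl
  have hAB : ∀ n, A n ≤ B n := by
    intro n; cases n with
    | zero => exact le_refl _
    | succ k => rw [hBsucc]; exact le_max_right _ _
  have hBmono : Monotone B := by
    apply monotone_nat_of_le_succ
    intro n; rw [hBsucc]; exact le_max_left _ _
  have hB0 : ∀ n, 0 ≤ B n := fun n => le_trans (hA0 n) (hAB n)
  refine ⟨fun y => B ⌈|y|⌉₊ + (2 * K + 2 * C + 3 * C * y ^ 2), 2 * C, ?_, by positivity, ?_, ?_⟩
  · intro y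
    have := hB0 ⌈|y|⌉₊
    positivity
  · -- bounded on compact sets
    intro s hs
    obtain ⟨R, hR⟩ := hs.isBounded.subset_ball 0
    refine ⟨B ⌈|R|⌉₊ + (2 * K + 2 * C + 3 * C * R ^ 2), ?_⟩
    intro y hy
    have hyR : |y| ≤ |R| := by
      have := hR hy
      simp [Metric.mem_ball, Real.dist_eq] at this
      exact le_trans this.le (le_abs_self R)
    have h1 : B ⌈|y|⌉₊ ≤ B ⌈|R|⌉₊ := hBmono (Nat.ceil_le_ceil hyR)
    have h2 : y ^ 2 ≤ R ^ 2 := by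
      rw [← sq_abs y, ← sq_abs R]
      exact pow_le_pow_left₀ (abs_nonneg _) hyR 2
    show B ⌈|y|⌉₊ + (2 * K + 2 * C + 3 * C * y ^ 2) ≤ _
    nlinarith
  · intro x y
    set d := |x - y| with hd
    have hd0 : 0 ≤ d := abs_nonneg _
    rcases le_or_gt d 1 with hcase | hcase
    · -- close: use Lipschitz on [-(⌈|y|⌉+1), ⌈|y|⌉+1]
      set n := ⌈|y|⌉₊ with hn
      have hyn : |y| ≤ (n : ℝ) := Nat.le_ceil _
      have hxn : |x| ≤ (n : ℝ) + 1 := by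
        have : |x| ≤ |y| + d := by
          have := abs_sub_abs_le_abs_sub x y
          linarith
        linarith
      have hxm : x ∈ Set.Icc (-((n : ℝ) + 1)) ((n : ℝ) + 1) := abs_le.mp hxn
      have hym : y ∈ Set.Icc (-((n : ℝ) + 1)) ((n : ℝ) + 1) := by
        refine abs_le.mp (le_trans hyn ?_); linarith
      have := hAspec n x hxm y hym
      have hAB' : A n * d ≤ B n * d := mul_le_mul_of_nonneg_right (hAB n) hd0
      have h2K : 0 ≤ (2 * K + 2 * C + 3 * C * y ^ 2) * d := by positivity
      have h2C : 0 ≤ 2 * C * d ^ 2 := by positivity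
      calc |m x - m y| ≤ A n * d := this
        _ ≤ B n * d := hAB'
        _ ≤ (B n + (2 * K + 2 * C + 3 * C * y ^ 2)) * d + 2 * C * d ^ 2 := by nlinarith
    · -- far: use growth bound
      obtain ⟨hx1, hx2⟩ := hbd x
      obtain ⟨hy1, hy2⟩ := hbd y
      have habs : |m x - m y| ≤ (K + C * (1 + x ^ 2)) + (K + C * (1 + y ^ 2)) := by
        rw [abs_sub_le_iff]
        constructor <;> nlinarith
      have hx2d : x ^ 2 ≤ 2 * y ^ 2 + 2 * d ^ 2 := by
        have h : |x| ≤ |y| + d := by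
          have := abs_sub_abs_le_abs_sub x y
          linarith
        nlinarith [sq_abs x, sq_abs y, sq_nonneg (|y| - d), abs_nonneg x, abs_nonneg y,
          mul_le_mul h h (abs_nonneg x) (by positivity)]
      have hBn : 0 ≤ B ⌈|y|⌉₊ := hB0 _
      show |m x - m y| ≤ (B ⌈|y|⌉₊ + (2 * K + 2 * C + 3 * C * y ^ 2)) * d + 2 * C * d ^ 2
      nlinarith [mul_nonneg hBn hd0,
        mul_nonneg (by positivity : (0:ℝ) ≤ 2 * K + 2 * C + 3 * C * y ^ 2)
          (by linarith : (0:ℝ) ≤ d - 1)]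
end

section
/- Let γ be a Borel probability measure on ℝ with zero mean, second moment equal to 1, and finite third absolute moment, and let φ be a finite signed Borel measure on ℝ with finite third absolute moment. Denote by γ̂ and φ̂ their Fourier transforms and by γ̂', γ̂'', γ̂''' and φ̂', φ̂'', φ̂''' the derivatives in the Fourier variable ξ. Define R(ξ) := φ̂(0)γ̂(ξ) − φ̂(ξ) + (φ̂'(0)γ̂(ξ) − (1/2)(φ̂(0) + φ̂''(0))γ̂'(ξ)) ξ. Then for all ξ ∈ ℝ: (i) |R(ξ)| ≤ ((1/2)‖φ̂‖_∞ + ‖φ̂'‖_∞ + ‖φ̂''‖_∞) |ξ|², and (ii) |R(ξ)| ≤ ((1/12)(‖φ̂‖_∞ + 3‖φ̂''‖_∞) ‖γ̂'''‖_∞ + (1/2)‖φ̂'‖_∞ + (1/6)‖φ̂'''‖_∞) |ξ|³, where ‖·‖_∞ denotes the supremum over ξ ∈ ℝ. -/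
open MeasureTheory Set Filter

/-- Fourier transform of a measure: `ν̂(ξ) = ∫ e^{−iξx} ν(dx)`. -/
noncomputable def ft (ν : Measure ℝ) (ξ : ℝ) : ℂ :=
  ∫ x, Complex.exp (-((ξ : ℂ) * (x : ℂ) * Complex.I)) ∂ν

/-- `k`-th derivative in `ξ` of the Fourier transform:
`ν̂⁽ᵏ⁾(ξ) = ∫ (−ix)^k e^{−iξx} ν(dx)`. -/
noncomputable def ftD (k : ℕ) (ν : Measure ℝ) (ξ : ℝ) : ℂ :=
  ∫ x, (-(Complex.I) * (x : ℂ)) ^ k * Complex.exp (-((ξ : ℂ) * (x : ℂ) * Complex.I)) ∂ν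

/-- The limit profile `γ_∞(x) = 2/(π (1+x²)²)`. -/
noncomputable def gammaInf : Measure ℝ :=
  volume.withDensity fun x => ENNReal.ofReal (2 / (Real.pi * (1 + x ^ 2) ^ 2))

/-- Fourier-based distance `d_s(γ₁, γ₂) = sup_{ξ≠0} |γ̂₁(ξ) − γ̂₂(ξ)| / |ξ|^s`. -/
noncomputable def dFourier (s : ℝ) (μ ν : Measure ℝ) : ℝ :=
  ⨆ ξ : {ξ : ℝ // ξ ≠ 0}, norm (ft μ ξ.1 - ft ν ξ.1) / |ξ.1| ^ s

/-- Supremum norm over the Fourier variable. -/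
noncomputable def supNorm (F : ℝ → ℂ) : ℝ := ⨆ ξ : ℝ, norm (F ξ)

lemma key_int (f : ℝ → ℂ) (hf : Continuous f) (C : ℝ) (n : ℕ)
    (hb : ∀ t, ‖f t‖ ≤ C * |t| ^ n) (ξ : ℝ) :
    ‖∫ t in (0:ℝ)..ξ, f t‖ ≤ C * |ξ| ^ (n + 1) / (n + 1) := by
  have hC : 0 ≤ C := by
    have := hb 1; simp at this; exact le_trans (norm_nonneg _) this
  have hcont : Continuous fun t : ℝ => C * |t| ^ n := by continuity
  have h1 : ‖∫ t in (0:ℝ)..ξ, f t‖ ≤ |∫ t in (0:ℝ)..ξ, C * |t| ^ n| :=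
    intervalIntegral.norm_integral_le_abs_of_norm_le (ae_of_all _ hb)
      (hcont.intervalIntegrable _ _)
  refine h1.trans (le_of_eq ?_)
  rcases le_total 0 ξ with h | h
  · rw [intervalIntegral.integral_congr (g := fun t => C * t ^ n)
      (fun t ht => by rw [Set.uIcc_of_le h] at ht; simp only [abs_of_nonneg ht.1]),
      intervalIntegral.integral_const_mul, integral_pow]
    simp only [zero_pow (Nat.succ_ne_zero n), sub_zero]
    rw [_root_.abs_of_nonneg h, _root_.abs_of_nonneg (by positivity)]
    ring
  · rw [intervalIntegral.integral_congr (g := fun t => C * (-t) ^ n)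
      (fun t ht => by rw [Set.uIcc_of_ge h] at ht; simp only [abs_of_nonpos ht.2]),
      show (∫ t in (0:ℝ)..ξ, C * (-t) ^ n) = ∫ t in (-ξ)..(-0:ℝ), C * t ^ n from
        intervalIntegral.integral_comp_neg (fun t : ℝ => C * t ^ n),
      intervalIntegral.integral_const_mul, integral_pow]
    rw [_root_.abs_of_nonpos h, neg_zero, zero_pow (Nat.succ_ne_zero n)]
    have hA : (0:ℝ) ≤ (-ξ) ^ (n + 1) := pow_nonneg (neg_nonneg.mpr h) _
    have hd : (0 - (-ξ) ^ (n + 1)) / ((n:ℝ) + 1) ≤ 0 :=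
      div_nonpos_iff.mpr (Or.inr ⟨by linarith, by positivity⟩)
    rw [_root_.abs_of_nonpos (mul_nonpos_iff.mpr (Or.inl ⟨hC, hd⟩))]
    ring

lemma cont_of_deriv (h h1 : ℝ → ℂ) (hd : ∀ t, HasDerivAt h (h1 t) t) : Continuous h :=
  continuous_iff_continuousAt.mpr fun t => (hd t).continuousAt

lemma ftc (h h1 : ℝ → ℂ) (hd : ∀ t, HasDerivAt h (h1 t) t) (hc : Continuous h1) (ξ : ℝ) :
    h ξ - h 0 = ∫ t in (0:ℝ)..ξ, h1 t :=
  (intervalIntegral.integral_eq_sub_of_hasDerivAt (fun t _ => hd t)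
    (hc.intervalIntegrable _ _)).symm

lemma taylor1 (h h1 : ℝ → ℂ) (hd : ∀ t, HasDerivAt h (h1 t) t) (hc : Continuous h1)
    (C : ℝ) (hb : ∀ t, ‖h1 t‖ ≤ C) (ξ : ℝ) : ‖h ξ - h 0‖ ≤ C * |ξ| := by
  rw [ftc h h1 hd hc ξ]
  simpa using key_int h1 hc C 0 (by simpa using hb) ξ

lemma taylor2 (h h1 h2 : ℝ → ℂ) (hd : ∀ t, HasDerivAt h (h1 t) t)
    (hd1 : ∀ t, HasDerivAt h1 (h2 t) t) (hc2 : Continuous h2)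
    (C : ℝ) (hb : ∀ t, ‖h2 t‖ ≤ C) (ξ : ℝ) :
    ‖h ξ - h 0 - h1 0 * (ξ : ℂ)‖ ≤ C * |ξ| ^ 2 / 2 := by
  have hc1 : Continuous fun t => h1 t - h1 0 :=
    (cont_of_deriv h1 h2 hd1).sub continuous_const
  have hH : ∀ t : ℝ, HasDerivAt (fun t : ℝ => h t - h 0 - h1 0 * (t : ℂ))
      (h1 t - h1 0) t := fun t => by
    have hc := ((hasDerivAt_id t).ofReal_comp).const_mul (h1 0)
    refine (((hd t).sub_const (h 0)).sub hc).congr_deriv ?_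
    simp
  have e : h ξ - h 0 - h1 0 * (ξ : ℂ) = ∫ t in (0:ℝ)..ξ, (h1 t - h1 0) := by
    have := ftc _ _ hH hc1 ξ
    simpa using this
  rw [e]
  have hb1 : ∀ t, ‖h1 t - h1 0‖ ≤ C * |t| ^ 1 := fun t => by
    simpa using taylor1 h1 h2 hd1 hc2 C hb t
  have := key_int _ hc1 C 1 hb1 ξ
  refine this.trans (le_of_eq ?_)
  norm_num

lemma taylor3 (h h1 h2 h3 : ℝ → ℂ) (hd : ∀ t, HasDerivAt h (h1 t) t)
    (hd1 : ∀ t, HasDerivAt h1 (h2 t) t) (hd2 : ∀ t, HasDerivAt h2 (h3 t) t)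
    (hc3 : Continuous h3)
    (C : ℝ) (hb : ∀ t, ‖h3 t‖ ≤ C) (ξ : ℝ) :
    ‖h ξ - h 0 - h1 0 * (ξ : ℂ) - h2 0 / 2 * ((ξ : ℂ) * (ξ : ℂ))‖ ≤ C * |ξ| ^ 3 / 6 := by
  have hc2 : Continuous h2 := cont_of_deriv h2 h3 hd2
  have hcH' : Continuous fun t : ℝ => h1 t - h1 0 - h2 0 * (t : ℂ) :=
    ((cont_of_deriv h1 h2 hd1).sub continuous_const).sub
      (continuous_const.mul Complex.continuous_ofReal)
  have hH : ∀ t : ℝ, HasDerivAt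
      (fun t : ℝ => h t - h 0 - h1 0 * (t : ℂ) - h2 0 / 2 * ((t : ℂ) * (t : ℂ)))
      (h1 t - h1 0 - h2 0 * (t : ℂ)) t := fun t => by
    have hq : HasDerivAt (fun y : ℝ => ((y : ℂ) * (y : ℂ))) ((t : ℂ) + (t : ℂ)) t := by
      refine (((hasDerivAt_id t).ofReal_comp).mul ((hasDerivAt_id t).ofReal_comp)).congr_deriv ?_
      simp
    have h₁ := (((hd t).sub_const (h 0)).sub
      (((hasDerivAt_id t).ofReal_comp).const_mul (h1 0))).sub (hq.const_mul (h2 0 / 2))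
    refine h₁.congr_deriv ?_
    push_cast
    ring
  have e : h ξ - h 0 - h1 0 * (ξ : ℂ) - h2 0 / 2 * ((ξ : ℂ) * (ξ : ℂ))
      = ∫ t in (0:ℝ)..ξ, (h1 t - h1 0 - h2 0 * (t : ℂ)) := by
    have := ftc _ _ hH hcH' ξ
    simpa using this
  rw [e]
  have hb2 : ∀ t, ‖h1 t - h1 0 - h2 0 * (t : ℂ)‖ ≤ C / 2 * |t| ^ 2 := fun t =>
    (taylor2 h1 h2 h3 hd1 hd2 hc3 C hb t).trans (le_of_eq (by ring))
  have := key_int _ hcH' (C / 2) 2 hb2 ξ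
  refine this.trans (le_of_eq ?_)
  norm_num
  ring


lemma nm2 {a b : ℂ} {A B : ℝ} (ha : ‖a‖ ≤ A) (hb : ‖b‖ ≤ B) (hA : 0 ≤ A) :
    ‖a * b‖ ≤ A * B := by
  rw [norm_mul]; exact mul_le_mul ha hb (norm_nonneg _) hA

lemma tri4 (a b c d : ℂ) : ‖a + b - c - d‖ ≤ ‖a‖ + ‖b‖ + ‖c‖ + ‖d‖ := by
  calc ‖a + b - c - d‖ ≤ ‖a + b - c‖ + ‖d‖ := norm_sub_le _ _
    _ ≤ ‖a + b‖ + ‖c‖ + ‖d‖ := by gcongr ?_ + _; exact norm_sub_le _ _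
    _ ≤ ‖a‖ + ‖b‖ + ‖c‖ + ‖d‖ := by gcongr ?_ + _ + _; exact norm_add_le _ _

set_option maxHeartbeats 2000000 in
lemma abstract_est (f0 f1 f2 f3 g0 g1 g2 g3 : ℝ → ℂ)
    (hf0 : ∀ t, HasDerivAt f0 (f1 t) t) (hf1 : ∀ t, HasDerivAt f1 (f2 t) t)
    (hf2 : ∀ t, HasDerivAt f2 (f3 t) t) (hf3c : Continuous f3)
    (hg0 : ∀ t, HasDerivAt g0 (g1 t) t) (hg1 : ∀ t, HasDerivAt g1 (g2 t) t)
    (hg2 : ∀ t, HasDerivAt g2 (g3 t) t) (hg3c : Continuous g3)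
    (hg00 : g0 0 = 1) (hg10 : g1 0 = 0) (hg20 : g2 0 = -1)
    (hg1b : ∀ t, ‖g1 t‖ ≤ 1) (hg2b : ∀ t, ‖g2 t‖ ≤ 1)
    (N0 N1 N2 N3 M : ℝ)
    (hN0 : ∀ t, ‖f0 t‖ ≤ N0) (hN1 : ∀ t, ‖f1 t‖ ≤ N1) (hN2 : ∀ t, ‖f2 t‖ ≤ N2)
    (hN3 : ∀ t, ‖f3 t‖ ≤ N3) (hM : ∀ t, ‖g3 t‖ ≤ M) (ξ : ℝ) :
    ‖f0 0 * g0 ξ - f0 ξ + (f1 0 * g0 ξ - (1/2 : ℂ) * (f0 0 + f2 0) * g1 ξ) * (ξ : ℂ)‖ ≤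
      (1/2 * N0 + N1 + N2) * |ξ| ^ 2 ∧
    ‖f0 0 * g0 ξ - f0 ξ + (f1 0 * g0 ξ - (1/2 : ℂ) * (f0 0 + f2 0) * g1 ξ) * (ξ : ℂ)‖ ≤
      (1/12 * (N0 + 3 * N2) * M + 1/2 * N1 + 1/6 * N3) * |ξ| ^ 3 := by
  have hN0' : 0 ≤ N0 := le_trans (norm_nonneg _) (hN0 0)
  have hN1' : 0 ≤ N1 := le_trans (norm_nonneg _) (hN1 0)
  have hN2' : 0 ≤ N2 := le_trans (norm_nonneg _) (hN2 0)
  have hN3' : 0 ≤ N3 := le_trans (norm_nonneg _) (hN3 0)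
  have hM' : 0 ≤ M := le_trans (norm_nonneg _) (hM 0)
  have hg2c : Continuous g2 := cont_of_deriv g2 g3 hg2
  have hg1c : Continuous g1 := cont_of_deriv g1 g2 hg1
  have hf2c : Continuous f2 := cont_of_deriv f2 f3 hf2
  have hxi : ‖(ξ : ℂ)‖ = |ξ| := Complex.norm_real ξ
  -- small bounds on g1, g0
  have hg1small : ∀ t, ‖g1 t‖ ≤ |t| := fun t => by
    have := taylor1 g1 g2 hg1 hg2c 1 hg2b t
    rw [hg10, sub_zero] at this
    simpa using this
  have hg0small : ‖g0 ξ - 1‖ ≤ |ξ| := by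
    have := taylor1 g0 g1 hg0 hg1c 1 hg1b ξ
    rw [hg00] at this
    simpa using this
  have hg0sq : ‖g0 ξ - 1‖ ≤ |ξ| ^ 2 / 2 := by
    have := taylor2 g0 g1 g2 hg0 hg1 hg2c 1 hg2b ξ
    rw [hg00, hg10, zero_mul, sub_zero] at this
    simpa using this
  have hg1plus : ‖g1 ξ + (ξ : ℂ)‖ ≤ M * |ξ| ^ 2 / 2 := by
    have := taylor2 g1 g2 g3 hg1 hg2 hg3c M hM ξ
    rw [hg10, hg20, sub_zero] at this
    have e : g1 ξ - -1 * (ξ : ℂ) = g1 ξ + (ξ : ℂ) := by ring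
    rwa [e] at this
  -- the auxiliary function A
  set A : ℝ → ℂ := fun t => g0 t - 1 - (1/2 : ℂ) * (t : ℂ) * g1 t with hA
  set A' : ℝ → ℂ := fun t => (1/2 : ℂ) * g1 t - (1/2 : ℂ) * (t : ℂ) * g2 t with hA'
  have hAd : ∀ t, HasDerivAt A (A' t) t := fun t => by
    have h₁ := ((hg0 t).sub_const 1).sub
      ((((hasDerivAt_id t).ofReal_comp).const_mul ((1/2 : ℂ))).mul (hg1 t))
    refine h₁.congr_deriv ?_
    simp only [hA', id_eq]
    push_cast
    ring
  have hA'd : ∀ t : ℝ, HasDerivAt A' (-(1/2 : ℂ) * (t : ℂ) * g3 t) t := fun t => by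
    have h₁ := ((hg1 t).const_mul ((1/2 : ℂ))).sub
      ((((hasDerivAt_id t).ofReal_comp).const_mul ((1/2 : ℂ))).mul (hg2 t))
    refine h₁.congr_deriv ?_
    simp only [id_eq]
    push_cast
    ring
  have hA'c : Continuous A' :=
    (continuous_const.mul hg1c).sub
      ((continuous_const.mul Complex.continuous_ofReal).mul hg2c)
  have hA''c : Continuous fun t : ℝ => -(1/2 : ℂ) * (t : ℂ) * g3 t :=
    (continuous_const.mul Complex.continuous_ofReal).mul hg3c
  have hA0 : A 0 = 0 := by simp [hA, hg00]
  have hA'0 : A' 0 = 0 := by simp [hA', hg10]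
  have hAint : ∀ ζ : ℝ, A ζ = ∫ t in (0:ℝ)..ζ, A' t := fun ζ => by
    have := ftc A A' hAd hA'c ζ
    rwa [hA0, sub_zero] at this
  -- bound (i) on A
  have hAi : ‖A ξ‖ ≤ |ξ| ^ 2 / 2 := by
    rw [hAint ξ]
    have hb : ∀ t, ‖A' t‖ ≤ 1 * |t| ^ 1 := fun t => by
      have h₁ : ‖(1/2 : ℂ) * g1 t‖ ≤ 1/2 * |t| :=
        nm2 (by norm_num) (hg1small t) (by norm_num)
      have h₂ : ‖(1/2 : ℂ) * (t : ℂ) * g2 t‖ ≤ 1/2 * |t| * 1 := by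
        refine nm2 (nm2 (by norm_num) (le_of_eq (Complex.norm_real t)) (by norm_num))
          (hg2b t) (by positivity)
      have := norm_sub_le ((1/2 : ℂ) * g1 t) ((1/2 : ℂ) * (t : ℂ) * g2 t)
      simp only [hA']
      calc ‖(1/2 : ℂ) * g1 t - (1/2 : ℂ) * (t : ℂ) * g2 t‖
          ≤ ‖(1/2 : ℂ) * g1 t‖ + ‖(1/2 : ℂ) * (t : ℂ) * g2 t‖ := norm_sub_le _ _
        _ ≤ 1 * |t| ^ 1 := by rw [pow_one]; linarith
    have := key_int A' hA'c 1 1 hb ξ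
    refine this.trans (le_of_eq ?_)
    norm_num
  -- bound (ii) on A
  have hAii : ‖A ξ‖ ≤ M * |ξ| ^ 3 / 12 := by
    rw [hAint ξ]
    have hA'b : ∀ t, ‖A' t‖ ≤ M / 4 * |t| ^ 2 := fun t => by
      have e : A' t = A' t - A' 0 := by rw [hA'0, sub_zero]
      rw [e, ftc A' _ hA'd hA''c t]
      have hb : ∀ s : ℝ, ‖-(1/2 : ℂ) * (s : ℂ) * g3 s‖ ≤ M / 2 * |s| ^ 1 := fun s => by
        rw [pow_one]
        have : ‖-(1/2 : ℂ) * (s : ℂ)‖ = 1/2 * |s| := by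
          rw [norm_mul, Complex.norm_real]
          norm_num
        calc ‖-(1/2 : ℂ) * (s : ℂ) * g3 s‖ ≤ (1/2 * |s|) * M :=
              nm2 (le_of_eq this) (hM s) (by positivity)
          _ = M / 2 * |s| := by ring
      have := key_int _ hA''c (M / 2) 1 hb t
      refine this.trans (le_of_eq ?_)
      norm_num
      ring
    have := key_int A' hA'c (M / 4) 2 hA'b ξ
    refine this.trans (le_of_eq ?_)
    norm_num
    ring
  -- Taylor bounds on f
  have hT2 : ‖f0 ξ - f0 0 - f1 0 * (ξ : ℂ)‖ ≤ N2 * |ξ| ^ 2 / 2 :=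
    taylor2 f0 f1 f2 hf0 hf1 hf2c N2 hN2 ξ
  have hT3 : ‖f0 ξ - f0 0 - f1 0 * (ξ : ℂ) - f2 0 / 2 * ((ξ : ℂ) * (ξ : ℂ))‖ ≤
      N3 * |ξ| ^ 3 / 6 := taylor3 f0 f1 f2 f3 hf0 hf1 hf2 hf3c N3 hN3 ξ
  -- norms of the pieces
  have B1i : ‖f0 0 * A ξ‖ ≤ N0 * (|ξ| ^ 2 / 2) := nm2 (hN0 0) hAi hN0'
  have B1ii : ‖f0 0 * A ξ‖ ≤ N0 * (M * |ξ| ^ 3 / 12) := nm2 (hN0 0) hAii hN0'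
  have B2i : ‖f1 0 * (ξ : ℂ) * (g0 ξ - 1)‖ ≤ N1 * |ξ| * |ξ| :=
    nm2 (nm2 (hN1 0) (le_of_eq hxi) hN1') hg0small (by positivity)
  have B2ii : ‖f1 0 * (ξ : ℂ) * (g0 ξ - 1)‖ ≤ N1 * |ξ| * (|ξ| ^ 2 / 2) :=
    nm2 (nm2 (hN1 0) (le_of_eq hxi) hN1') hg0sq (by positivity)
  have Bhalf : ‖(1/2 : ℂ) * f2 0 * (ξ : ℂ)‖ ≤ 1/2 * N2 * |ξ| :=
    nm2 (nm2 (by norm_num) (hN2 0) (by norm_num)) (le_of_eq hxi) (by positivity)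
  have B4i : ‖(1/2 : ℂ) * f2 0 * (ξ : ℂ) * g1 ξ‖ ≤ 1/2 * N2 * |ξ| * |ξ| :=
    nm2 Bhalf (hg1small ξ) (by positivity)
  have B4ii : ‖(1/2 : ℂ) * f2 0 * (ξ : ℂ) * ((ξ : ℂ) + g1 ξ)‖ ≤
      1/2 * N2 * |ξ| * (M * |ξ| ^ 2 / 2) := by
    refine nm2 Bhalf ?_ (by positivity)
    rw [add_comm]
    exact hg1plus
  constructor
  · have id1 : f0 0 * g0 ξ - f0 ξ + (f1 0 * g0 ξ - (1/2 : ℂ) * (f0 0 + f2 0) * g1 ξ) * (ξ : ℂ)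
        = f0 0 * A ξ + f1 0 * (ξ : ℂ) * (g0 ξ - 1)
          - (f0 ξ - f0 0 - f1 0 * (ξ : ℂ)) - (1/2 : ℂ) * f2 0 * (ξ : ℂ) * g1 ξ := by
      simp only [hA]
      ring
    rw [id1]
    have tri : ‖f0 0 * A ξ + f1 0 * (ξ : ℂ) * (g0 ξ - 1)
        - (f0 ξ - f0 0 - f1 0 * (ξ : ℂ)) - (1/2 : ℂ) * f2 0 * (ξ : ℂ) * g1 ξ‖
        ≤ ‖f0 0 * A ξ‖ + ‖f1 0 * (ξ : ℂ) * (g0 ξ - 1)‖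
          + ‖f0 ξ - f0 0 - f1 0 * (ξ : ℂ)‖ + ‖(1/2 : ℂ) * f2 0 * (ξ : ℂ) * g1 ξ‖ :=
      tri4 _ _ _ _
    refine tri.trans ?_
    have hsq : |ξ| ^ 2 = |ξ| * |ξ| := sq |ξ|
    nlinarith [B1i, B2i, hT2, B4i]
  · have id2 : f0 0 * g0 ξ - f0 ξ + (f1 0 * g0 ξ - (1/2 : ℂ) * (f0 0 + f2 0) * g1 ξ) * (ξ : ℂ)
        = f0 0 * A ξ + f1 0 * (ξ : ℂ) * (g0 ξ - 1)
          - (f0 ξ - f0 0 - f1 0 * (ξ : ℂ) - f2 0 / 2 * ((ξ : ℂ) * (ξ : ℂ)))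
          - (1/2 : ℂ) * f2 0 * (ξ : ℂ) * ((ξ : ℂ) + g1 ξ) := by
      simp only [hA]
      ring
    rw [id2]
    have tri : ‖f0 0 * A ξ + f1 0 * (ξ : ℂ) * (g0 ξ - 1)
        - (f0 ξ - f0 0 - f1 0 * (ξ : ℂ) - f2 0 / 2 * ((ξ : ℂ) * (ξ : ℂ)))
        - (1/2 : ℂ) * f2 0 * (ξ : ℂ) * ((ξ : ℂ) + g1 ξ)‖
        ≤ ‖f0 0 * A ξ‖ + ‖f1 0 * (ξ : ℂ) * (g0 ξ - 1)‖
          + ‖f0 ξ - f0 0 - f1 0 * (ξ : ℂ) - f2 0 / 2 * ((ξ : ℂ) * (ξ : ℂ))‖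
          + ‖(1/2 : ℂ) * f2 0 * (ξ : ℂ) * ((ξ : ℂ) + g1 ξ)‖ :=
      tri4 _ _ _ _
    refine tri.trans ?_
    have hcube : |ξ| ^ 3 = |ξ| * |ξ| ^ 2 := by ring
    nlinarith [B1ii, B2ii, hT3, B4ii]

noncomputable def fker (k : ℕ) (ξ x : ℝ) : ℂ :=
  (-(Complex.I) * (x : ℂ)) ^ k * Complex.exp (-((ξ : ℂ) * (x : ℂ) * Complex.I))

lemma ftD_eq (k : ℕ) (ν : Measure ℝ) (ξ : ℝ) : ftD k ν ξ = ∫ x, fker k ξ x ∂ν := rfl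

lemma ft_eq_ftD (ν : Measure ℝ) : ft ν = ftD 0 ν := by
  funext ξ; simp [ft, ftD]

lemma norm_fker (k : ℕ) (ξ x : ℝ) : ‖fker k ξ x‖ = |x| ^ k := by
  simp [fker, map_mul, map_pow, Complex.norm_exp]

lemma continuous_fker_x (k : ℕ) (ξ : ℝ) : Continuous fun x => fker k ξ x := by
  unfold fker; fun_prop

lemma continuous_fker_xi (k : ℕ) (x : ℝ) : Continuous fun ξ => fker k ξ x := by
  unfold fker; fun_prop

section
variable (ν : Measure ℝ) [IsFiniteMeasure ν]
  (h3 : (∫⁻ x, ENNReal.ofReal (|x| ^ 3) ∂ν) < ⊤)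

include h3 in
lemma integrable_abs_pow {k : ℕ} (hk : k ≤ 3) : Integrable (fun x => |x| ^ k) ν := by
  have h3' : Integrable (fun x => |x| ^ 3) ν := by
    refine ⟨(measurable_abs.pow_const 3).aestronglyMeasurable, ?_⟩
    rw [hasFiniteIntegral_iff_ofReal (ae_of_all _ fun x => by positivity)]
    exact h3
  have h0 : Integrable (fun _ : ℝ => (1 : ℝ)) ν := integrable_const 1
  refine (h0.add h3').mono ((measurable_abs.pow_const k).aestronglyMeasurable)
    (ae_of_all _ fun x => ?_)
  have h1 : |x| ^ k ≤ 1 + |x| ^ 3 := by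
    rcases le_total (|x|) 1 with h | h
    · have h2 := pow_le_one₀ (abs_nonneg x) h (n := k)
      have h4 : (0:ℝ) ≤ |x| ^ 3 := by positivity
      linarith
    · have h2 := pow_le_pow_right₀ h hk
      linarith
  simp only [Pi.add_apply, Real.norm_eq_abs, abs_pow, abs_abs]
  calc |x| ^ k ≤ 1 + |x| ^ 3 := h1
    _ ≤ |1 + |x| ^ 3| := le_abs_self _

include h3 in
lemma integrable_fker {k : ℕ} (hk : k ≤ 3) (ξ : ℝ) : Integrable (fun x => fker k ξ x) ν := by
  refine (integrable_abs_pow ν h3 hk).mono' ((continuous_fker_x k ξ).aestronglyMeasurable)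
    (ae_of_all _ fun x => le_of_eq (norm_fker k ξ x))

omit [IsFiniteMeasure ν] in
lemma norm_ftD_le (k : ℕ) (ξ : ℝ) : ‖ftD k ν ξ‖ ≤ ∫ x, |x| ^ k ∂ν := by
  rw [ftD_eq]
  refine (norm_integral_le_integral_norm _).trans (le_of_eq ?_)
  exact integral_congr_ae (ae_of_all _ fun x => norm_fker k ξ x)

include h3 in
lemma continuous_ftD {k : ℕ} (hk : k ≤ 3) : Continuous (ftD k ν) := by
  show Continuous fun ξ => ∫ x, fker k ξ x ∂ν
  refine continuous_of_dominated (bound := fun x => |x| ^ k)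
    (fun ξ => (continuous_fker_x k ξ).aestronglyMeasurable)
    (fun ξ => ae_of_all _ fun x => le_of_eq (norm_fker k ξ x))
    (integrable_abs_pow ν h3 hk)
    (ae_of_all _ fun x => continuous_fker_xi k x)

lemma hasDerivAt_fker (k : ℕ) (x : ℝ) (ξ : ℝ) :
    HasDerivAt (fun ξ : ℝ => fker k ξ x) (fker (k+1) ξ x) ξ := by
  have h0 : HasDerivAt (fun w : ℂ => -(w * (x : ℂ) * Complex.I)) (-((x:ℂ) * Complex.I)) (ξ:ℂ) := by
    have := ((hasDerivAt_id (ξ:ℂ)).mul_const ((x:ℂ) * Complex.I)).neg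
    rw [show (fun w : ℂ => -(w * (x : ℂ) * Complex.I)) = -fun y => id y * ((x:ℂ) * Complex.I) by
      funext w; simp [mul_assoc]]
    exact this.congr_deriv (by simp)
  have h1 := (h0.cexp).const_mul ((-(Complex.I) * (x : ℂ)) ^ k)
  have h2 := h1.comp_ofReal
  refine h2.congr_deriv ?_
  simp only [fker]
  ring

include h3 in
lemma hasDerivAt_ftD {k : ℕ} (hk : k + 1 ≤ 3) (ξ : ℝ) :
    HasDerivAt (ftD k ν) (ftD (k+1) ν ξ) ξ := by
  show HasDerivAt (fun ζ => ∫ x, fker k ζ x ∂ν) (∫ x, fker (k+1) ξ x ∂ν) ξ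
  have := hasDerivAt_integral_of_dominated_loc_of_deriv_le (μ := ν)
    (F := fun ξ x => fker k ξ x) (F' := fun ξ x => fker (k+1) ξ x) (x₀ := ξ)
    (bound := fun x => |x| ^ (k+1)) (s := Set.univ) Filter.univ_mem
    (Eventually.of_forall fun ζ => (continuous_fker_x k ζ).aestronglyMeasurable)
    (integrable_fker ν h3 (le_trans (Nat.le_succ k) hk) ξ)
    ((continuous_fker_x (k+1) ξ).aestronglyMeasurable)
    (ae_of_all _ fun x ζ _ => le_of_eq (norm_fker (k+1) ζ x))
    (integrable_abs_pow ν h3 hk)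
    (ae_of_all _ fun x ζ _ => hasDerivAt_fker k x ζ)
  exact this.2

end


lemma norm_le_supNorm (F : ℝ → ℂ) (B : ℝ) (hB : ∀ ζ, ‖F ζ‖ ≤ B) (ξ : ℝ) :
    ‖F ξ‖ ≤ supNorm F := by
  exact le_ciSup (f := fun ζ => norm (F ζ))
    ⟨B, by
      rintro y ⟨ζ, rfl⟩
      show norm (F ζ) ≤ B
      exact hB ζ⟩ ξ

/-- **Pointwise estimates on the remainder `R`.** Let `γ` be a probability measure with
zero mean, unit second moment and finite third absolute moment, and let `φ = φ⁺ − φ⁻`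
be a finite signed measure with finite third absolute moment, with Fourier transform
`φ̂⁽ᵏ⁾(ξ) = ftD k φ⁺ ξ − ftD k φ⁻ ξ`. With
`R(ξ) = φ̂(0)γ̂(ξ) − φ̂(ξ) + (φ̂'(0)γ̂(ξ) − ½(φ̂(0) + φ̂''(0))γ̂'(ξ))ξ`, one has
`|R(ξ)| ≤ (½‖φ̂‖_∞ + ‖φ̂'‖_∞ + ‖φ̂''‖_∞)|ξ|²` and
`|R(ξ)| ≤ ((1/12)(‖φ̂‖_∞ + 3‖φ̂''‖_∞)‖γ̂'''‖_∞ + ½‖φ̂'‖_∞ + (1/6)‖φ̂'''‖_∞)|ξ|³`. -/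
theorem remainder_estimates (γ : Measure ℝ) [IsProbabilityMeasure γ]
    (hmean : (∫ x, x ∂γ) = 0) (hvar : (∫ x, x ^ 2 ∂γ) = 1)
    (hγ3 : (∫⁻ x, ENNReal.ofReal (|x| ^ 3) ∂γ) < ⊤)
    (φp φm : Measure ℝ) (hφp : IsFiniteMeasure φp) (hφm : IsFiniteMeasure φm)
    (hφp3 : (∫⁻ x, ENNReal.ofReal (|x| ^ 3) ∂φp) < ⊤)
    (hφm3 : (∫⁻ x, ENNReal.ofReal (|x| ^ 3) ∂φm) < ⊤) :
    ∀ ξ : ℝ,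
      norm ((ftD 0 φp 0 - ftD 0 φm 0) * ft γ ξ - (ftD 0 φp ξ - ftD 0 φm ξ)
          + ((ftD 1 φp 0 - ftD 1 φm 0) * ft γ ξ
            - (1 / 2 : ℂ) * ((ftD 0 φp 0 - ftD 0 φm 0) + (ftD 2 φp 0 - ftD 2 φm 0))
              * ftD 1 γ ξ) * (ξ : ℂ))
        ≤ ((1 / 2) * supNorm (fun ζ => ftD 0 φp ζ - ftD 0 φm ζ)
            + supNorm (fun ζ => ftD 1 φp ζ - ftD 1 φm ζ)
            + supNorm (fun ζ => ftD 2 φp ζ - ftD 2 φm ζ)) * |ξ| ^ 2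
      ∧
      norm ((ftD 0 φp 0 - ftD 0 φm 0) * ft γ ξ - (ftD 0 φp ξ - ftD 0 φm ξ)
          + ((ftD 1 φp 0 - ftD 1 φm 0) * ft γ ξ
            - (1 / 2 : ℂ) * ((ftD 0 φp 0 - ftD 0 φm 0) + (ftD 2 φp 0 - ftD 2 φm 0))
              * ftD 1 γ ξ) * (ξ : ℂ))
        ≤ ((1 / 12) * (supNorm (fun ζ => ftD 0 φp ζ - ftD 0 φm ζ)
              + 3 * supNorm (fun ζ => ftD 2 φp ζ - ftD 2 φm ζ)) * supNorm (ftD 3 γ)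
            + (1 / 2) * supNorm (fun ζ => ftD 1 φp ζ - ftD 1 φm ζ)
            + (1 / 6) * supNorm (fun ζ => ftD 3 φp ζ - ftD 3 φm ζ)) * |ξ| ^ 3 := by
  haveI := hφp; haveI := hφm
  intro ξ
  -- integrability of moments of γ
  have hx1 : Integrable (fun x : ℝ => x) γ := by
    refine (integrable_abs_pow γ hγ3 (k := 1) (by norm_num)).mono'
      measurable_id.aestronglyMeasurable (ae_of_all _ fun x => ?_)
    simp [Real.norm_eq_abs]
  have hx2 : Integrable (fun x : ℝ => x ^ 2) γ := by
    refine (integrable_abs_pow γ hγ3 (k := 2) (by norm_num)).mono'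
      (measurable_id.pow_const 2).aestronglyMeasurable (ae_of_all _ fun x => ?_)
    simp [Real.norm_eq_abs, abs_pow]
  -- values of the derivatives of γ̂ at 0
  have hg00 : ftD 0 γ 0 = 1 := by
    rw [ftD_eq]
    have e : ∀ x : ℝ, fker 0 0 x = 1 := fun x => by simp [fker]
    rw [integral_congr_ae (ae_of_all _ e)]
    simp
  have hg10 : ftD 1 γ 0 = 0 := by
    rw [ftD_eq]
    have e : ∀ x : ℝ, fker 1 0 x = -Complex.I * (x : ℂ) := fun x => by simp [fker]
    rw [integral_congr_ae (ae_of_all _ e)]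
    have : ∫ x, -Complex.I * (x : ℂ) ∂γ = -Complex.I * ∫ x, (x : ℂ) ∂γ :=
      integral_const_mul _ _
    have h2 : (∫ x, (x : ℂ) ∂γ) = ((∫ x, x ∂γ : ℝ) : ℂ) := integral_ofReal
    rw [this, h2, hmean]
    simp
  have hg20 : ftD 2 γ 0 = -1 := by
    rw [ftD_eq]
    have e : ∀ x : ℝ, fker 2 0 x = ((-(x ^ 2) : ℝ) : ℂ) := fun x => by
      simp only [fker]
      have h2 : (-(Complex.I) * (x : ℂ)) ^ 2 = Complex.I ^ 2 * (x : ℂ) ^ 2 := by ring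
      rw [h2, Complex.I_sq]
      push_cast
      simp
    rw [integral_congr_ae (ae_of_all _ e)]
    have h3 : (∫ a, ((-(a ^ 2) : ℝ) : ℂ) ∂γ) = ((∫ a, -(a ^ 2) ∂γ : ℝ) : ℂ) := integral_ofReal
    rw [h3, integral_neg, hvar]
    simp
  -- moment bounds for γ
  have habs2 : (∫ x, |x| ^ 2 ∂γ) = 1 := by
    rw [integral_congr_ae (ae_of_all _ fun x => sq_abs x)]
    exact hvar
  have habs1 : (∫ x, |x| ^ 1 ∂γ) ≤ 1 := by
    have hmono : (∫ x, |x| ^ 1 ∂γ) ≤ ∫ x, (1 + x ^ 2) / 2 ∂γ := by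
      refine integral_mono (integrable_abs_pow γ hγ3 (by norm_num))
        (((integrable_const (1:ℝ)).add hx2).div_const 2) (fun x => ?_)
      have : 0 ≤ (|x| - 1) ^ 2 := sq_nonneg _
      have hsq : |x| ^ 2 = x ^ 2 := sq_abs x
      simp only [pow_one]
      nlinarith
    have : (∫ x, (1 + x ^ 2) / 2 ∂γ) = 1 := by
      rw [integral_div, integral_add (integrable_const 1) hx2, hvar]
      simp
    linarith [hmono, this.le, this.ge]
  have hg1b : ∀ t, ‖ftD 1 γ t‖ ≤ 1 := fun t =>
    (norm_ftD_le γ 1 t).trans habs1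
  have hg2b : ∀ t, ‖ftD 2 γ t‖ ≤ 1 := fun t =>
    (norm_ftD_le γ 2 t).trans habs2.le
  -- sup-norm bounds
  have hM : ∀ t, ‖ftD 3 γ t‖ ≤ supNorm (ftD 3 γ) :=
    norm_le_supNorm _ (∫ x, |x| ^ 3 ∂γ) (fun ζ => norm_ftD_le γ 3 ζ)
  have hN : ∀ k : ℕ, ∀ t, ‖ftD k φp t - ftD k φm t‖ ≤
      supNorm (fun ζ => ftD k φp ζ - ftD k φm ζ) := fun k t =>
    norm_le_supNorm _ ((∫ x, |x| ^ k ∂φp) + (∫ x, |x| ^ k ∂φm))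
      (fun ζ => (norm_sub_le _ _).trans
        (add_le_add (norm_ftD_le φp k ζ) (norm_ftD_le φm k ζ))) t
  -- derivatives
  have hfd : ∀ k : ℕ, k + 1 ≤ 3 → ∀ t : ℝ, HasDerivAt
      (fun ζ => ftD k φp ζ - ftD k φm ζ) (ftD (k+1) φp t - ftD (k+1) φm t) t :=
    fun k hk t => (hasDerivAt_ftD φp hφp3 hk t).sub (hasDerivAt_ftD φm hφm3 hk t)
  have hgd : ∀ k : ℕ, k + 1 ≤ 3 → ∀ t : ℝ, HasDerivAt (ftD k γ) (ftD (k+1) γ t) t :=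
    fun k hk t => hasDerivAt_ftD γ hγ3 hk t
  have hf3c : Continuous fun ζ => ftD 3 φp ζ - ftD 3 φm ζ :=
    (continuous_ftD φp hφp3 le_rfl).sub (continuous_ftD φm hφm3 le_rfl)
  have hg3c : Continuous (ftD 3 γ) := continuous_ftD γ hγ3 le_rfl
  rw [ft_eq_ftD γ]
  exact abstract_est
    (fun ζ => ftD 0 φp ζ - ftD 0 φm ζ) (fun ζ => ftD 1 φp ζ - ftD 1 φm ζ)
    (fun ζ => ftD 2 φp ζ - ftD 2 φm ζ) (fun ζ => ftD 3 φp ζ - ftD 3 φm ζ)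
    (ftD 0 γ) (ftD 1 γ) (ftD 2 γ) (ftD 3 γ)
    (hfd 0 (by norm_num)) (hfd 1 (by norm_num)) (hfd 2 (by norm_num)) hf3c
    (hgd 0 (by norm_num)) (hgd 1 (by norm_num)) (hgd 2 (by norm_num)) hg3c
    hg00 hg10 hg20 hg1b hg2b _ _ _ _ _
    (hN 0) (hN 1) (hN 2) (hN 3) hM ξ
end
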